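/- arXiv:2101.04567 — 9 statements merged into one kernel-verified Lean document; each statement's English description precedes it below -/
import Mathlib

section
/- Let {a_n}, {b_n}, and {δ_n} be sequences of nonnegative real numbers satisfying a_{n+1} ≤ (1 + δ_n) a_n + b_n for all n ∈ ℕ. If Σ_{n=0}^∞ δ_n < ∞ and Σ_{n=0}^∞ b_n < ∞, then lim_{n→∞} a_n exists. -/
/-- Lemma 2.1 (existence part): if nonnegative sequences satisfy
`a (n+1) ≤ (1 + δ n) * a n + b n` with `∑ δ n < ∞` and `∑ b n < ∞`,
then `lim a n` exists. -/
theorem stmt_0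
    (a b δ : ℕ → ℝ)
    (ha : ∀ n, 0 ≤ a n) (hb : ∀ n, 0 ≤ b n) (hδ : ∀ n, 0 ≤ δ n)
    (hrec : ∀ n, a (n + 1) ≤ (1 + δ n) * a n + b n)
    (hδsum : Summable δ) (hbsum : Summable b) :
    ∃ l : ℝ, Filter.Tendsto a Filter.atTop (nhds l) := by
  classical
  set P : ℕ → ℝ := fun n => ∏ k ∈ Finset.range n, (1 + δ k) with hPdef
  have hP1 : ∀ n, (1 : ℝ) ≤ P n := by
    intro n
    simp only [hPdef]
    calc (1:ℝ) = ∏ _k ∈ Finset.range n, (1:ℝ) := by simp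
      _ ≤ ∏ k ∈ Finset.range n, (1 + δ k) :=
          Finset.prod_le_prod (fun _ _ => zero_le_one)
            (fun k _ => by linarith [hδ k])
  have hPpos : ∀ n, 0 < P n := fun n => lt_of_lt_of_le one_pos (hP1 n)
  have hPsucc : ∀ n, P (n + 1) = P n * (1 + δ n) := fun n => by
    simp [hPdef, Finset.prod_range_succ]
  have hPmono : Monotone P := monotone_nat_of_le_succ fun n => by
    rw [hPsucc n]
    nlinarith [hPpos n, hδ n]
  have hPbdd : ∀ n, P n ≤ Real.exp (∑' k, δ k) := by
    intro n
    calc P n ≤ ∏ k ∈ Finset.range n, Real.exp (δ k) :=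
          Finset.prod_le_prod (fun k _ => by linarith [hδ k])
            (fun k _ => by linarith [Real.add_one_le_exp (δ k)])
      _ = Real.exp (∑ k ∈ Finset.range n, δ k) := (Real.exp_sum _ _).symm
      _ ≤ Real.exp (∑' k, δ k) :=
          Real.exp_le_exp.2 (Summable.sum_le_tsum _ (fun k _ => hδ k) hδsum)
  have hPbddAbove : BddAbove (Set.range P) :=
    ⟨Real.exp (∑' k, δ k), by rintro x ⟨n, rfl⟩; exact hPbdd n⟩
  have hPlim : Filter.Tendsto P Filter.atTop (nhds (⨆ n, P n)) :=
    tendsto_atTop_ciSup hPmono hPbddAbove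
  set v : ℕ → ℝ := fun n => a n / P n with hvdef
  set S : ℕ → ℝ := fun n => ∑ k ∈ Finset.range n, b k with hSdef
  set w : ℕ → ℝ := fun n => v n - S n with hwdef
  have hvstep : ∀ n, v (n + 1) ≤ v n + b n := by
    intro n
    have hPn := hPpos n
    have hPn1 := hPpos (n + 1)
    have hcan : a n / P n * P n = a n := div_mul_cancel₀ _ (ne_of_gt hPn)
    rw [hvdef]
    simp only
    rw [div_le_iff₀ hPn1, hPsucc n]
    have hbn : b n ≤ b n * (P n * (1 + δ n)) :=
      le_mul_of_one_le_right (hb n) (by nlinarith [hP1 n, hδ n])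
    have expand : (a n / P n + b n) * (P n * (1 + δ n))
        = a n * (1 + δ n) + b n * (P n * (1 + δ n)) := by
      rw [add_mul, ← mul_assoc, hcan]
    rw [expand]
    have := hrec n
    linarith
  have hwanti : Antitone w := antitone_nat_of_succ_le fun n => by
    have := hvstep n
    have hS : S (n + 1) = S n + b n := Finset.sum_range_succ _ _
    simp only [hwdef]
    rw [hS]
    linarith
  have hwbdd : BddBelow (Set.range w) := by
    refine ⟨-∑' k, b k, ?_⟩
    rintro x ⟨n, rfl⟩
    have hv0 : 0 ≤ v n := div_nonneg (ha n) (hPpos n).le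
    have hSn : S n ≤ ∑' k, b k := Summable.sum_le_tsum _ (fun k _ => hb k) hbsum
    simp only [hwdef]
    linarith
  have hwlim : Filter.Tendsto w Filter.atTop (nhds (⨅ n, w n)) :=
    tendsto_atTop_ciInf hwanti hwbdd
  have hSlim : Filter.Tendsto S Filter.atTop (nhds (∑' k, b k)) :=
    hbsum.hasSum.tendsto_sum_nat
  have hvlim : Filter.Tendsto v Filter.atTop (nhds ((⨅ n, w n) + ∑' k, b k)) := by
    have := hwlim.add hSlim
    refine this.congr fun n => ?_
    simp [hwdef]
  have hav : ∀ n, a n = v n * P n := fun n =>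
    (div_mul_cancel₀ _ (ne_of_gt (hPpos n))).symm
  refine ⟨((⨅ n, w n) + ∑' k, b k) * (⨆ n, P n), ?_⟩
  exact (hvlim.mul hPlim).congr fun n => (hav n).symm
end

section
/- Let {a_n}, {b_n}, and {δ_n} be sequences of nonnegative real numbers satisfying a_{n+1} ≤ (1 + δ_n) a_n + b_n for all n ∈ ℕ, with Σ_{n=0}^∞ δ_n < ∞ and Σ_{n=0}^∞ b_n < ∞. If {a_n} has a subsequence converging to 0, then lim_{n→∞} a_n = 0. -/
/-- Lemma 2.1 (second part): under the same hypotheses, if `a` has a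
subsequence converging to `0`, then `a` itself converges to `0`. -/
theorem stmt_1
    (a b δ : ℕ → ℝ)
    (ha : ∀ n, 0 ≤ a n) (hb : ∀ n, 0 ≤ b n) (hδ : ∀ n, 0 ≤ δ n)
    (hrec : ∀ n, a (n + 1) ≤ (1 + δ n) * a n + b n)
    (hδsum : Summable δ) (hbsum : Summable b)
    (φ : ℕ → ℕ) (hφ : StrictMono φ)
    (hsub : Filter.Tendsto (a ∘ φ) Filter.atTop (nhds 0)) :
    Filter.Tendsto a Filter.atTop (nhds 0) := by
  set C : ℝ := Real.exp (∑' k, δ k) with hCdef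
  have hC1 : (1 : ℝ) ≤ C := by
    rw [hCdef]
    calc (1:ℝ) = Real.exp 0 := (Real.exp_zero).symm
    _ ≤ Real.exp (∑' k, δ k) := Real.exp_le_exp.2 (tsum_nonneg hδ)
  have hC0 : (0 : ℝ) < C := lt_of_lt_of_le one_pos hC1
  -- the product bound
  have hprod_le : ∀ s : Finset ℕ, (∏ k ∈ s, (1 + δ k)) ≤ C := by
    intro s
    calc (∏ k ∈ s, (1 + δ k)) ≤ ∏ k ∈ s, Real.exp (δ k) := by
          apply Finset.prod_le_prod
          · intro k _; linarith [hδ k]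
          · intro k _
            have := Real.add_one_le_exp (δ k)
            linarith
      _ = Real.exp (∑ k ∈ s, δ k) := (Real.exp_sum s δ).symm
      _ ≤ C := Real.exp_le_exp.2 (Summable.sum_le_tsum s (fun k _ => hδ k) hδsum)
  have hprod_nonneg : ∀ s : Finset ℕ, (0:ℝ) ≤ ∏ k ∈ s, (1 + δ k) := by
    intro s; apply Finset.prod_nonneg; intro k _; linarith [hδ k]
  have hprod_one : ∀ s : Finset ℕ, (1:ℝ) ≤ ∏ k ∈ s, (1 + δ k) := by
    intro s
    calc (1:ℝ) = ∏ _k ∈ s, (1:ℝ) := by simp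
      _ ≤ ∏ k ∈ s, (1 + δ k) := by
          apply Finset.prod_le_prod (fun k _ => zero_le_one) (fun k _ => by linarith [hδ k])
  -- key estimate
  have key : ∀ n m : ℕ, a (n + m) ≤
      (∏ k ∈ Finset.Ico n (n + m), (1 + δ k)) *
        (a n + ∑ k ∈ Finset.Ico n (n + m), b k) := by
    intro n m
    induction m with
    | zero =>
      simp only [Nat.add_zero, Finset.Ico_self, Finset.prod_empty, Finset.sum_empty,
        add_zero, one_mul]
      exact le_rfl
    | succ m ih =>
      have hnm : n ≤ n + m := Nat.le_add_right n m
      have h1 : a (n + (m + 1)) ≤ (1 + δ (n + m)) * a (n + m) + b (n + m) := by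
        exact hrec (n + m)
      have hδnm : (0:ℝ) ≤ 1 + δ (n + m) := by linarith [hδ (n+m)]
      have h2 : (1 + δ (n + m)) * a (n + m) ≤
          (1 + δ (n + m)) * ((∏ k ∈ Finset.Ico n (n + m), (1 + δ k)) *
            (a n + ∑ k ∈ Finset.Ico n (n + m), b k)) :=
        mul_le_mul_of_nonneg_left ih hδnm
      rw [show n + (m + 1) = n + m + 1 from (Nat.add_assoc n m 1).symm,
        Finset.prod_Ico_succ_top hnm, Finset.sum_Ico_succ_top hnm]
      set P := ∏ k ∈ Finset.Ico n (n + m), (1 + δ k) with hP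
      set B := ∑ k ∈ Finset.Ico n (n + m), b k with hB
      have hP1 : (1:ℝ) ≤ P := hprod_one _
      have hbnm := hb (n + m)
      have h3 : (1:ℝ) ≤ P * (1 + δ (n + m)) := by
        have := mul_le_mul hP1 (by linarith [hδ (n+m)] : (1:ℝ) ≤ 1 + δ (n + m))
          zero_le_one (by linarith)
        linarith
      have : b (n + m) ≤ P * (1 + δ (n + m)) * b (n + m) :=
        le_mul_of_one_le_left hbnm h3
      calc a (n + (m + 1)) ≤ (1 + δ (n + m)) * a (n + m) + b (n + m) := h1
        _ ≤ (1 + δ (n + m)) * (P * (a n + B)) + b (n + m) := by linarith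
        _ ≤ (1 + δ (n + m)) * (P * (a n + B)) + P * (1 + δ (n + m)) * b (n + m) := by
            linarith
        _ = P * (1 + δ (n + m)) * (a n + (B + b (n + m))) := by ring
  -- main convergence
  rw [Metric.tendsto_atTop]
  intro ε hε
  have hε2 : 0 < ε / (2 * C) := by positivity
  -- tails of b tend to 0
  have htail : Filter.Tendsto (fun n => ∑' k, b (k + n)) Filter.atTop (nhds 0) :=
    tendsto_sum_nat_add b
  obtain ⟨N1, hN1⟩ := (Metric.tendsto_atTop.1 htail) (ε / (2 * C)) hε2
  obtain ⟨j0, hj0⟩ := (Metric.tendsto_atTop.1 hsub) (ε / (2 * C)) hε2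
  set j := max j0 N1 with hj
  set n := φ j with hn
  have hn_ge : N1 ≤ n := le_trans (le_max_right _ _) (le_trans (hφ.le_apply) le_rfl)
  have han : a n < ε / (2 * C) := by
    have := hj0 j (le_max_left _ _)
    rwa [Function.comp_apply, Real.dist_eq, sub_zero, abs_of_nonneg (ha (φ j))] at this
  have htail_n : (∑' k, b (k + n)) < ε / (2 * C) := by
    have := hN1 n hn_ge
    rwa [Real.dist_eq, sub_zero, abs_of_nonneg (tsum_nonneg (fun k => hb _))] at this
  refine ⟨n, fun m hm => ?_⟩
  rw [Real.dist_eq, sub_zero, abs_of_nonneg (ha m)]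
  obtain ⟨d, rfl⟩ := Nat.exists_eq_add_of_le hm
  have hsum_le : (∑ k ∈ Finset.Ico n (n + d), b k) ≤ ∑' k, b (k + n) := by
    rw [Finset.sum_Ico_eq_sum_range]
    have hsummable : Summable (fun k => b (k + n)) := (summable_nat_add_iff n).2 hbsum
    calc (∑ k ∈ Finset.range (n + d - n), b (n + k))
        = ∑ k ∈ Finset.range (n + d - n), b (k + n) := by
          apply Finset.sum_congr rfl; intro k _; rw [Nat.add_comm]
      _ ≤ ∑' k, b (k + n) := Summable.sum_le_tsum _ (fun k _ => hb _) hsummable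
  have hkey := key n d
  have hsumnn : (0:ℝ) ≤ ∑ k ∈ Finset.Ico n (n + d), b k :=
    Finset.sum_nonneg (fun k _ => hb k)
  have hbound : a (n + d) ≤ C * (a n + ∑ k ∈ Finset.Ico n (n + d), b k) := by
    calc a (n + d) ≤ (∏ k ∈ Finset.Ico n (n + d), (1 + δ k)) *
          (a n + ∑ k ∈ Finset.Ico n (n + d), b k) := hkey
      _ ≤ C * (a n + ∑ k ∈ Finset.Ico n (n + d), b k) := by
          apply mul_le_mul_of_nonneg_right (hprod_le _)
          linarith [ha n]
  have : a (n + d) < C * (ε / (2 * C) + ε / (2 * C)) := by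
    have hlt : a n + (∑ k ∈ Finset.Ico n (n + d), b k) < ε / (2 * C) + ε / (2 * C) := by
      have := lt_of_le_of_lt hsum_le htail_n
      linarith
    calc a (n + d) ≤ C * (a n + ∑ k ∈ Finset.Ico n (n + d), b k) := hbound
      _ < C * (ε / (2 * C) + ε / (2 * C)) := by
          apply mul_lt_mul_of_pos_left hlt hC0
  have heq : C * (ε / (2 * C) + ε / (2 * C)) = ε := by
    field_simp; ring
  linarith
end

section
/- Let C be a nonempty compact convex subset of a real uniformly convex Banach space X, let T : C → C be a uniformly L-Lipschitzian, nearly nonexpansive mapping with respect to {a_n} with Σ_{n=0}^∞ a_n < ∞, let {α_n} ⊂ (0,1), and let {x_n} be the modified Picard–Mann hybrid iteration y_n = (1 − α_n)x_n + α_n T^n x_n, x_{n+1} = T^n y_n. Then for every p ∈ F(T), lim_{n→∞} ‖x_n − p‖ exists. -/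
/-- Theorem 3.1 (i): `lim ‖x n - p‖` exists for every fixed point `p` of `T`. -/
theorem stmt_8
    {X : Type*} [NormedAddCommGroup X] [NormedSpace ℝ X]
    [CompleteSpace X] [UniformConvexSpace X]
    (C : Set X) (hC : C.Nonempty) (hCcp : IsCompact C) (hCcv : Convex ℝ C)
    (T : X → X) (hT : Set.MapsTo T C C)
    (L : ℝ) (hL : 0 < L)
    (hTL : ∀ x ∈ C, ∀ y ∈ C, ∀ n, 1 ≤ n → ‖T^[n] x - T^[n] y‖ ≤ L * ‖x - y‖)
    (a : ℕ → ℝ) (ha : ∀ n, a n ∈ Set.Ico (0 : ℝ) 1)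
    (halim : Filter.Tendsto a Filter.atTop (nhds 0))
    (hasum : Summable a)
    (hTa : ∀ x ∈ C, ∀ y ∈ C, ∀ n, 1 ≤ n → ‖T^[n] x - T^[n] y‖ ≤ ‖x - y‖ + a n)
    (α : ℕ → ℝ) (hα : ∀ n, α n ∈ Set.Ioo (0 : ℝ) 1)
    (x y : ℕ → X)
    (hx0 : x 0 ∈ C)
    (hxC : ∀ n, x n ∈ C) (hyC : ∀ n, y n ∈ C)
    (hy : ∀ n, y n = (1 - α n) • x n + α n • T^[n] (x n))
    (hx : ∀ n, x (n + 1) = T^[n] (y n))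
    (p : X) (hp : p ∈ C) (hfix : T p = p) :
    ∃ c : ℝ, Filter.Tendsto (fun n => ‖x n - p‖) Filter.atTop (nhds c) := by
  -- key nearly-nonexpansive estimate, valid for all n (n = 0 is trivial)
  have key : ∀ u ∈ C, ∀ n : ℕ, ‖T^[n] u - T^[n] p‖ ≤ ‖u - p‖ + a n := by
    intro u hu n
    rcases Nat.eq_zero_or_pos n with rfl | hn
    · simpa using (ha 0).1
    · exact hTa u hu p hp n hn
  have hpfix : ∀ n : ℕ, T^[n] p = p := fun n => Function.iterate_fixed hfix n
  set d : ℕ → ℝ := fun n => ‖x n - p‖ with hd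
  have hstep : ∀ n, d (n + 1) ≤ d n + 2 * a n := by
    intro n
    have hαn := hα n
    have han := (ha n).1
    have hyp : ‖y n - p‖ ≤ d n + α n * a n := by
      have h1 : y n - p = (1 - α n) • (x n - p) + α n • (T^[n] (x n) - p) := by
        rw [hy n]; module
      have h2 : ‖T^[n] (x n) - p‖ ≤ ‖x n - p‖ + a n := by
        have := key (x n) (hxC n) n
        rwa [hpfix n] at this
      calc ‖y n - p‖ ≤ ‖(1 - α n) • (x n - p)‖ + ‖α n • (T^[n] (x n) - p)‖ := by
            rw [h1]; exact norm_add_le _ _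
        _ = (1 - α n) * ‖x n - p‖ + α n * ‖T^[n] (x n) - p‖ := by
            rw [norm_smul, norm_smul, Real.norm_eq_abs, Real.norm_eq_abs,
              abs_of_pos hαn.1, abs_of_pos (by linarith [hαn.2])]
        _ ≤ (1 - α n) * ‖x n - p‖ + α n * (‖x n - p‖ + a n) := by
            have := mul_le_mul_of_nonneg_left h2 hαn.1.le
            linarith
        _ = d n + α n * a n := by ring
    have h3 : d (n + 1) ≤ ‖y n - p‖ + a n := by
      have := key (y n) (hyC n) n
      rw [hpfix n] at this
      simpa [hd, hx n] using this
    have hαle : α n * a n ≤ a n := by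
      nlinarith [hαn.1, hαn.2, han]
    linarith
  -- e n = d n - partial sums of 2a is antitone and bounded below
  set S : ℕ → ℝ := fun n => ∑ k ∈ Finset.range n, 2 * a k with hS
  have hSmono : ∀ n, S n ≤ 2 * ∑' k, a k := by
    intro n
    have : ∑ k ∈ Finset.range n, a k ≤ ∑' k, a k :=
      Summable.sum_le_tsum _ (fun k _ => (ha k).1) hasum
    simp only [hS, ← Finset.mul_sum]
    linarith
  have hanti : Antitone (fun n => d n - S n) := by
    apply antitone_nat_of_succ_le
    intro n
    have h1 : S (n + 1) = S n + 2 * a n := Finset.sum_range_succ _ n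
    have := hstep n
    simp only [h1]; linarith
  have hbdd : BddBelow (Set.range fun n => d n - S n) := by
    refine ⟨-(2 * ∑' k, a k), ?_⟩
    rintro _ ⟨n, rfl⟩
    have : (0 : ℝ) ≤ d n := norm_nonneg _
    have := hSmono n
    simp only
    linarith
  have hconv : Filter.Tendsto (fun n => d n - S n) Filter.atTop
      (nhds (⨅ n, d n - S n)) := tendsto_atTop_ciInf hanti hbdd
  have hSconv : Filter.Tendsto S Filter.atTop (nhds (2 * ∑' k, a k)) := by
    have := (hasum.mul_left 2).hasSum.tendsto_sum_nat
    simpa [hS, tsum_mul_left] using this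
  refine ⟨(⨅ n, d n - S n) + 2 * ∑' k, a k, ?_⟩
  have : Filter.Tendsto (fun n => (d n - S n) + S n) Filter.atTop
      (nhds ((⨅ n, d n - S n) + 2 * ∑' k, a k)) := hconv.add hSconv
  simpa using this
end

section
/- Let C be a nonempty compact convex subset of a real uniformly convex Banach space X, let T : C → C be a uniformly L-Lipschitzian, nearly nonexpansive mapping with respect to {a_n} with Σ_{n=0}^∞ a_n < ∞, let {α_n} satisfy 0 < a ≤ α_n ≤ b < 1 for all n, and let {x_n} be the modified Picard–Mann hybrid iteration y_n = (1 − α_n)x_n + α_n T^n x_n, x_{n+1} = T^n y_n. Then lim_{n→∞} ‖x_n − T^n x_n‖ = 0. -/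
open Filter

lemma uc_combo {X : Type*} [NormedAddCommGroup X] [NormedSpace ℝ X] [UniformConvexSpace X]
    {ε R₀ : ℝ} (hε : 0 < ε) (hR₀ : 0 < R₀) :
    ∃ δ : ℝ, 0 < δ ∧ ∀ R : ℝ, 0 < R → R ≤ R₀ → ∀ x y : X, ‖x‖ ≤ R → ‖y‖ ≤ R →
      ε ≤ ‖x - y‖ → ∀ t : ℝ, 0 ≤ t → t ≤ 1 →
      ‖t • x + (1 - t) • y‖ ≤ R * (1 - min t (1 - t) * δ) := by
  obtain ⟨δ, hδ, hball⟩ :=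
    exists_forall_closed_ball_dist_add_le_two_sub X (div_pos hε hR₀)
  refine ⟨δ, hδ, fun R hR hRR x y hx hy hxy t ht ht1 => ?_⟩
  have hRinv : (0:ℝ) ≤ R⁻¹ := inv_nonneg.2 hR.le
  have hx' : ‖R⁻¹ • x‖ ≤ 1 := by
    rw [norm_smul, Real.norm_eq_abs, abs_of_nonneg hRinv]
    rw [inv_mul_le_iff₀ hR, mul_one]; exact hx
  have hy' : ‖R⁻¹ • y‖ ≤ 1 := by
    rw [norm_smul, Real.norm_eq_abs, abs_of_nonneg hRinv]
    rw [inv_mul_le_iff₀ hR, mul_one]; exact hy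
  have hxy' : ε / R₀ ≤ ‖R⁻¹ • x - R⁻¹ • y‖ := by
    rw [← smul_sub, norm_smul, Real.norm_eq_abs, abs_of_nonneg hRinv]
    calc ε / R₀ ≤ ε / R := by gcongr
      _ ≤ ‖x - y‖ / R := by gcongr
      _ = R⁻¹ * ‖x - y‖ := by rw [div_eq_inv_mul]
  have hsum0 : ‖R⁻¹ • x + R⁻¹ • y‖ ≤ 2 - δ := hball hx' hy' hxy'
  have hsum : ‖x + y‖ ≤ R * (2 - δ) := by
    have : ‖x + y‖ = R * ‖R⁻¹ • x + R⁻¹ • y‖ := by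
      rw [← smul_add, norm_smul, Real.norm_eq_abs, abs_of_nonneg hRinv]
      field_simp
    rw [this]
    exact mul_le_mul_of_nonneg_left hsum0 hR.le
  rcases le_or_gt t (1/2) with h2 | h2
  · have hmin : min t (1 - t) = t := min_eq_left (by linarith)
    have key : t • x + (1 - t) • y = t • (x + y) + (1 - 2*t) • y := by module
    rw [hmin, key]
    calc ‖t • (x + y) + (1 - 2*t) • y‖ ≤ ‖t • (x + y)‖ + ‖(1 - 2*t) • y‖ := norm_add_le _ _
      _ = t * ‖x + y‖ + (1 - 2*t) * ‖y‖ := by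
          rw [norm_smul, norm_smul, Real.norm_eq_abs, Real.norm_eq_abs,
            abs_of_nonneg ht, abs_of_nonneg (by linarith : (0:ℝ) ≤ 1 - 2*t)]
      _ ≤ t * (R * (2 - δ)) + (1 - 2*t) * R := by
          have h1 := mul_le_mul_of_nonneg_left hsum ht
          have h2 := mul_le_mul_of_nonneg_left hy (by linarith : (0:ℝ) ≤ 1 - 2*t)
          linarith
      _ = R * (1 - t * δ) := by ring
  · have hmin : min t (1 - t) = 1 - t := min_eq_right (by linarith)
    have key : t • x + (1 - t) • y = (1 - t) • (x + y) + (2*t - 1) • x := by module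
    rw [hmin, key]
    calc ‖(1 - t) • (x + y) + (2*t - 1) • x‖ ≤ ‖(1 - t) • (x + y)‖ + ‖(2*t - 1) • x‖ :=
        norm_add_le _ _
      _ = (1 - t) * ‖x + y‖ + (2*t - 1) * ‖x‖ := by
          rw [norm_smul, norm_smul, Real.norm_eq_abs, Real.norm_eq_abs,
            abs_of_nonneg (by linarith : (0:ℝ) ≤ 1 - t), abs_of_nonneg (by linarith : (0:ℝ) ≤ 2*t - 1)]
      _ ≤ (1 - t) * (R * (2 - δ)) + (2*t - 1) * R := by
          have h1 := mul_le_mul_of_nonneg_left hsum (by linarith : (0:ℝ) ≤ 1 - t)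
          have h2 := mul_le_mul_of_nonneg_left hx (by linarith : (0:ℝ) ≤ 2*t - 1)
          linarith
      _ = R * (1 - (1 - t) * δ) := by ring

lemma schu {X : Type*} [NormedAddCommGroup X] [NormedSpace ℝ X] [UniformConvexSpace X]
    (u v : ℕ → X) (t : ℕ → ℝ) (a' b' : ℝ) (ha' : 0 < a') (hb' : b' < 1)
    (ht : ∀ n, a' ≤ t n ∧ t n ≤ b') (c : ℝ)
    (U V : ℕ → ℝ) (hU : ∀ n, ‖u n‖ ≤ U n) (hV : ∀ n, ‖v n‖ ≤ V n)
    (hUc : Tendsto U atTop (nhds c)) (hVc : Tendsto V atTop (nhds c))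
    (hW : Tendsto (fun n => ‖t n • u n + (1 - t n) • v n‖) atTop (nhds c)) :
    Tendsto (fun n => ‖u n - v n‖) atTop (nhds 0) := by
  have hc : 0 ≤ c := ge_of_tendsto' hW (fun n => norm_nonneg _)
  rw [NormedAddCommGroup.tendsto_nhds_zero]
  intro ε hε
  rcases hc.eq_or_lt with hc0 | hc0
  · -- c = 0
    have h1 : ∀ᶠ n in atTop, U n < ε/2 := hUc.eventually (gt_mem_nhds (by linarith))
    have h2 : ∀ᶠ n in atTop, V n < ε/2 := hVc.eventually (gt_mem_nhds (by linarith))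
    filter_upwards [h1, h2] with n h1 h2
    have : ‖u n - v n‖ ≤ U n + V n := (norm_sub_le _ _).trans (by gcongr <;> [exact hU n; exact hV n])
    rw [norm_norm]
    linarith
  · -- 0 < c
    set lam := min a' (1 - b') with hlamdef
    have hlam : 0 < lam := lt_min ha' (by linarith)
    obtain ⟨δ, hδ, hδp⟩ := uc_combo (X := X) hε (show (0:ℝ) < c + 1 by linarith)
    set η := min (c * lam * δ / 2) 1 with hηdef
    have hη : 0 < η := lt_min (by positivity) one_pos
    have hη1 : η ≤ 1 := min_le_right _ _
    have hη2 : η ≤ c * lam * δ / 2 := min_le_left _ _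
    set R := c + η with hRdef
    have hRpos : 0 < R := by positivity
    have hRle : R ≤ c + 1 := by linarith
    have hlamδ : 0 < lam * δ := by positivity
    have key : R * (1 - lam * δ) < c := by nlinarith
    have h1 : ∀ᶠ n in atTop, U n < c + η := hUc.eventually (gt_mem_nhds (by linarith))
    have h2 : ∀ᶠ n in atTop, V n < c + η := hVc.eventually (gt_mem_nhds (by linarith))
    have h3 : ∀ᶠ n in atTop, R * (1 - lam * δ) < ‖t n • u n + (1 - t n) • v n‖ :=
      hW.eventually (lt_mem_nhds key)
    filter_upwards [h1, h2, h3] with n h1 h2 h3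
    rw [norm_norm]
    by_contra hcon
    push_neg at hcon
    have htn := ht n
    have hmin : lam ≤ min (t n) (1 - t n) :=
      le_min ((min_le_left _ _).trans htn.1) ((min_le_right _ _).trans (by linarith [htn.2]))
    have hb := hδp R hRpos hRle (u n) (v n) ((hU n).trans (by linarith)) ((hV n).trans (by linarith))
      hcon (t n) (by linarith [htn.1]) (by linarith [htn.2])
    have : R * (1 - min (t n) (1 - t n) * δ) ≤ R * (1 - lam * δ) := by
      apply mul_le_mul_of_nonneg_left _ hRpos.le
      nlinarith
    linarith

lemma exists_fixedPt {X : Type*} [NormedAddCommGroup X] [NormedSpace ℝ X] [UniformConvexSpace X]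
    (C : Set X) (hC : C.Nonempty) (hCcp : IsCompact C) (hCcv : Convex ℝ C)
    (T : X → X) (hT : Set.MapsTo T C C) (L : ℝ)
    (hTL : ∀ x ∈ C, ∀ y ∈ C, ∀ n, 1 ≤ n → ‖T^[n] x - T^[n] y‖ ≤ L * ‖x - y‖)
    (a : ℕ → ℝ) (ha0 : ∀ n, 0 ≤ a n) (halim : Tendsto a atTop (nhds 0))
    (hTa : ∀ x ∈ C, ∀ y ∈ C, ∀ n, 1 ≤ n → ‖T^[n] x - T^[n] y‖ ≤ ‖x - y‖ + a n) :
    ∃ p ∈ C, T p = p := by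
  obtain ⟨x₀, hx₀⟩ := hC
  set w : ℕ → X := fun n => T^[n] x₀ with hwdef
  have hwC : ∀ n, w n ∈ C := fun n => hT.iterate n hx₀
  obtain ⟨D, hD⟩ := Metric.isBounded_iff.1 hCcp.isBounded
  have hDn : ∀ u ∈ C, ∀ v ∈ C, ‖u - v‖ ≤ D := by
    intro u hu v hv; rw [← dist_eq_norm]; exact hD hu hv
  set φ : X → ℝ := fun u => limsup (fun n => ‖w n - u‖) atTop with hφdef
  -- boundedness facts
  have hBd : ∀ u : X, IsBoundedUnder (· ≤ ·) atTop (fun n => ‖w n - u‖) := by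
    intro u
    refine isBoundedUnder_of ⟨D + ‖x₀ - u‖, fun n => ?_⟩
    calc ‖w n - u‖ ≤ ‖w n - x₀‖ + ‖x₀ - u‖ := by
          have : w n - u = (w n - x₀) + (x₀ - u) := by abel
          rw [this]; exact norm_add_le _ _
      _ ≤ D + ‖x₀ - u‖ := by gcongr; exact hDn _ (hwC n) _ hx₀
  have hCo : ∀ u : X, IsCoboundedUnder (· ≤ ·) atTop (fun n => ‖w n - u‖) := by
    intro u
    exact IsBoundedUnder.isCoboundedUnder_le (isBoundedUnder_of ⟨0, fun n => norm_nonneg _⟩)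
  have hφ0 : ∀ u : X, 0 ≤ φ u := by
    intro u
    exact le_limsup_of_frequently_le (Frequently.of_forall (fun n => norm_nonneg _)) (hBd u)
  -- eventual bound from limsup
  have hev : ∀ (u : X) (η : ℝ), 0 < η → ∀ᶠ n in atTop, ‖w n - u‖ < φ u + η := by
    intro u η hη
    exact eventually_lt_of_limsup_lt (by linarith) (hBd u)
  -- limsup upper bound from eventual bound
  have hle : ∀ (u : X) (K : ℝ), (∀ᶠ n in atTop, ‖w n - u‖ ≤ K) → φ u ≤ K := by
    intro u K h
    exact limsup_le_of_le (hCo u) h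
  -- almost-Lipschitz property
  have hφlip : ∀ u v : X, φ u ≤ φ v + ‖v - u‖ := by
    intro u v
    refine le_of_forall_pos_le_add (fun η hη => ?_)
    have h1 : ∀ᶠ n in atTop, ‖w n - u‖ ≤ φ v + ‖v - u‖ + η := by
      filter_upwards [hev v η hη] with n hn
      have : w n - u = (w n - v) + (v - u) := by abel
      calc ‖w n - u‖ ≤ ‖w n - v‖ + ‖v - u‖ := by rw [this]; exact norm_add_le _ _
        _ ≤ φ v + ‖v - u‖ + η := by linarith
    linarith [hle u _ h1]
  have hφcont : ContinuousOn φ C := by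
    have : LipschitzWith 1 φ := by
      apply LipschitzWith.of_dist_le_mul
      intro u v
      rw [Real.dist_eq, NNReal.coe_one, one_mul, abs_sub_le_iff, dist_eq_norm]
      have hnr : ‖v - u‖ = ‖u - v‖ := norm_sub_rev _ _
      constructor
      · have := hφlip u v; linarith
      · have := hφlip v u; linarith
    exact this.continuous.continuousOn
  obtain ⟨z, hzC, hzmin⟩ := hCcp.exists_isMinOn ⟨x₀, hx₀⟩ hφcont
  set r := φ z with hrdef
  have hr0 : 0 ≤ r := hφ0 z
  have hmin : ∀ u ∈ C, r ≤ φ u := fun u hu => hzmin hu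
  -- triangle bound ‖u - z‖ ≤ φ u + φ z
  have htri : ∀ u : X, ‖u - z‖ ≤ φ u + φ z := by
    intro u
    refine le_of_forall_pos_le_add (fun η hη => ?_)
    have h2 : 0 < η / 2 := by linarith
    obtain ⟨n, hn1, hn2⟩ := ((hev u _ h2).and (hev z _ h2)).exists
    have : u - z = (w n - z) - (w n - u) := by abel
    calc ‖u - z‖ = ‖(w n - z) - (w n - u)‖ := by rw [this]
      _ ≤ ‖w n - z‖ + ‖w n - u‖ := norm_sub_le _ _
      _ ≤ φ u + φ z + η := by linarith
  -- center attraction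
  have hattract : ∀ ε : ℝ, 0 < ε → ∃ θ : ℝ, 0 < θ ∧ ∀ u ∈ C, φ u ≤ r + θ → ‖u - z‖ < ε := by
    intro ε hε
    rcases hr0.eq_or_lt with hr | hr
    · refine ⟨ε/4, by linarith, fun u huC hu => ?_⟩
      linarith [htri u, hrdef]
    · obtain ⟨δ, hδpos, hδ⟩ := uc_combo (X := X) hε (show (0:ℝ) < r + 1 by linarith)
      set θ := min (r * δ / 8) (1/2) with hθdef
      have hθpos : 0 < θ := lt_min (by positivity) (by norm_num)
      have hθ1 : θ ≤ 1/2 := min_le_right _ _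
      have hθ2 : θ ≤ r * δ / 8 := min_le_left _ _
      refine ⟨θ, hθpos, fun u huC hu => ?_⟩
      by_contra hcon
      push_neg at hcon
      set R := r + 2 * θ with hRdef
      have hRpos : 0 < R := by linarith
      have hRle : R ≤ r + 1 := by linarith
      set m := (1/2 : ℝ) • u + (1/2 : ℝ) • z with hmdef
      have hmC : m ∈ C := hCcv huC hzC (by norm_num) (by norm_num) (by norm_num)
      have hφm : φ m ≤ R * (1 - (1/2) * δ) := by
        apply hle
        filter_upwards [hev u θ hθpos, hev z θ hθpos] with n hn1 hn2
        have hxn : ‖w n - u‖ ≤ R := by linarith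
        have hyn : ‖w n - z‖ ≤ R := by linarith
        have hsep : ε ≤ ‖(w n - u) - (w n - z)‖ := by
          have : (w n - u) - (w n - z) = z - u := by abel
          rw [this, norm_sub_rev]
          exact hcon
        have := hδ R hRpos hRle (w n - u) (w n - z) hxn hyn hsep (1/2) (by norm_num) (by norm_num)
        have hmm : (1/2 : ℝ) • (w n - u) + (1 - 1/2 : ℝ) • (w n - z) = w n - m := by
          rw [hmdef]; module
        rw [hmm] at this
        have hminhalf : min (1/2 : ℝ) (1 - 1/2) = (1/2 : ℝ) := by norm_num
        rw [hminhalf] at this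
        exact this
      have hrm : r ≤ φ m := hmin m hmC
      nlinarith
  -- φ (T^[k] z) ≤ r + a k  for k ≥ 1
  have hφT : ∀ k : ℕ, 1 ≤ k → φ (T^[k] z) ≤ r + a k := by
    intro k hk
    refine le_of_forall_pos_le_add (fun η hη => ?_)
    apply hle
    obtain ⟨N, hN⟩ := eventually_atTop.1 (hev z η hη)
    refine eventually_atTop.2 ⟨N + k, fun n hn => ?_⟩
    have h1 : w n = T^[k] (w (n - k)) := by
      rw [hwdef]
      simp only
      rw [← Function.iterate_add_apply]
      congr 1
      omega
    calc ‖w n - T^[k] z‖ = ‖T^[k] (w (n - k)) - T^[k] z‖ := by rw [← h1]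
      _ ≤ ‖w (n - k) - z‖ + a k := hTa _ (hwC _) _ hzC k hk
      _ ≤ (r + η) + a k := by
          have := hN (n - k) (by omega)
          linarith
      _ = r + a k + η := by ring
  -- T^[k] z → z
  have htend : Tendsto (fun k => T^[k] z) atTop (nhds z) := by
    rw [Metric.tendsto_atTop]
    intro ε hε
    obtain ⟨θ, hθpos, hatt⟩ := hattract ε hε
    obtain ⟨N, hN⟩ := eventually_atTop.1 (halim.eventually (gt_mem_nhds hθpos))
    refine ⟨N + 1, fun k hk => ?_⟩
    rw [dist_eq_norm]
    apply hatt _ (hT.iterate k hzC)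
    calc φ (T^[k] z) ≤ r + a k := hφT k (by omega)
      _ ≤ r + θ := by have := hN k (by omega); linarith
  -- conclude T z = z
  have h2 : Tendsto (fun k => T^[k+1] z) atTop (nhds z) := htend.comp (tendsto_add_atTop_nat 1)
  have h3 : Tendsto (fun k => T^[k+1] z) atTop (nhds (T z)) := by
    rw [tendsto_iff_dist_tendsto_zero]
    have hnorm : Tendsto (fun k => L * ‖T^[k] z - z‖) atTop (nhds (L * 0)) := by
      apply Tendsto.const_mul
      have := tendsto_iff_dist_tendsto_zero.1 htend
      simpa [dist_eq_norm] using this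
    rw [mul_zero] at hnorm
    apply tendsto_of_tendsto_of_tendsto_of_le_of_le tendsto_const_nhds hnorm
    · intro k; exact dist_nonneg
    · intro k
      show dist (T^[k+1] z) (T z) ≤ L * ‖T^[k] z - z‖
      rw [dist_eq_norm, Function.iterate_succ_apply']
      have := hTL (T^[k] z) (hT.iterate k hzC) z hzC 1 le_rfl
      simpa using this
  exact ⟨z, hzC, (tendsto_nhds_unique h3 h2)⟩


/-- Theorem 3.1 (ii): `‖x n - T^[n] (x n)‖ → 0`. -/
theorem stmt_9
    {X : Type*} [NormedAddCommGroup X] [NormedSpace ℝ X]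
    [CompleteSpace X] [UniformConvexSpace X]
    (C : Set X) (hC : C.Nonempty) (hCcp : IsCompact C) (hCcv : Convex ℝ C)
    (T : X → X) (hT : Set.MapsTo T C C)
    (L : ℝ) (hL : 0 < L)
    (hTL : ∀ x ∈ C, ∀ y ∈ C, ∀ n, 1 ≤ n → ‖T^[n] x - T^[n] y‖ ≤ L * ‖x - y‖)
    (a : ℕ → ℝ) (ha : ∀ n, a n ∈ Set.Ico (0 : ℝ) 1)
    (halim : Filter.Tendsto a Filter.atTop (nhds 0))
    (hasum : Summable a)
    (hTa : ∀ x ∈ C, ∀ y ∈ C, ∀ n, 1 ≤ n → ‖T^[n] x - T^[n] y‖ ≤ ‖x - y‖ + a n)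
    (α : ℕ → ℝ) (a' b' : ℝ) (ha' : 0 < a') (hb' : b' < 1)
    (hα : ∀ n, a' ≤ α n ∧ α n ≤ b')
    (x y : ℕ → X)
    (hx0 : x 0 ∈ C)
    (hxC : ∀ n, x n ∈ C) (hyC : ∀ n, y n ∈ C)
    (hy : ∀ n, y n = (1 - α n) • x n + α n • T^[n] (x n))
    (hx : ∀ n, x (n + 1) = T^[n] (y n)) :
    Filter.Tendsto (fun n => ‖x n - T^[n] (x n)‖) Filter.atTop (nhds 0) := by
  obtain ⟨p, hpC, hp⟩ := exists_fixedPt C hC hCcp hCcv T hT L hTL a (fun n => (ha n).1) halim hTa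
  have hpIter : ∀ n, T^[n] p = p := fun n => Function.iterate_fixed hp n
  have hTa' : ∀ u ∈ C, ∀ v ∈ C, ∀ n : ℕ, ‖T^[n] u - T^[n] v‖ ≤ ‖u - v‖ + a n := by
    intro u hu v hv n
    cases n with
    | zero => simpa using (ha 0).1
    | succ m => exact hTa u hu v hv (m+1) (by omega)
  set d : ℕ → ℝ := fun n => ‖x n - p‖ with hddef
  have hub : ∀ n, ‖T^[n] (x n) - p‖ ≤ d n + a n := by
    intro n
    have := hTa' (x n) (hxC n) p hpC n
    rwa [hpIter n] at this
  have d1 : ∀ n, ‖y n - p‖ ≤ d n + a n := by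
    intro n
    have hyp : y n - p = (1 - α n) • (x n - p) + α n • (T^[n] (x n) - p) := by
      rw [hy n]; module
    have hα1 := (hα n).1
    have hα2 := (hα n).2
    have ha0 := (ha n).1
    calc ‖y n - p‖ ≤ ‖(1 - α n) • (x n - p)‖ + ‖α n • (T^[n] (x n) - p)‖ := by
          rw [hyp]; exact norm_add_le _ _
      _ = (1 - α n) * ‖x n - p‖ + α n * ‖T^[n] (x n) - p‖ := by
          rw [norm_smul, norm_smul, Real.norm_eq_abs, Real.norm_eq_abs,
            abs_of_nonneg (by linarith : (0:ℝ) ≤ 1 - α n), abs_of_nonneg (by linarith)]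
      _ ≤ (1 - α n) * d n + α n * (d n + a n) := by
          have h1 := mul_le_mul_of_nonneg_left (hub n) (by linarith : (0:ℝ) ≤ α n)
          simp only [hddef]
          linarith
      _ ≤ d n + a n := by nlinarith
  have d2 : ∀ n, d (n+1) ≤ ‖y n - p‖ + a n := by
    intro n
    show ‖x (n+1) - p‖ ≤ _
    rw [hx n]
    have := hTa' (y n) (hyC n) p hpC n
    rwa [hpIter n] at this
  have d3 : ∀ n, d (n+1) ≤ d n + 2 * a n := fun n => (d2 n).trans (by linarith [d1 n, (ha n).1])
  -- convergence of d
  set S := ∑' n, a n with hSdef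
  set A : ℕ → ℝ := fun n => ∑ k ∈ Finset.range n, a k with hAdef
  have hA : Tendsto A atTop (nhds S) := hasum.hasSum.tendsto_sum_nat
  have hAle : ∀ n, A n ≤ S := fun n => Summable.sum_le_tsum (Finset.range n) (fun i _ => (ha i).1) hasum
  set e : ℕ → ℝ := fun n => d n - 2 * A n with hedef
  have hmono : Antitone e := by
    apply antitone_nat_of_succ_le
    intro n
    have hAs : A (n+1) = A n + a n := Finset.sum_range_succ _ _
    simp only [hedef]
    rw [hAs]
    linarith [d3 n]
  have hbdd : BddBelow (Set.range e) := by
    refine ⟨-2 * S, ?_⟩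
    rintro _ ⟨n, rfl⟩
    have : (0:ℝ) ≤ d n := norm_nonneg _
    have := hAle n
    simp only [hedef]
    linarith
  have he : Tendsto e atTop (nhds (⨅ n, e n)) := tendsto_atTop_ciInf hmono hbdd
  set c : ℝ := (⨅ n, e n) + 2 * S with hcdef
  have hd : Tendsto d atTop (nhds c) := by
    have : d = fun n => e n + 2 * A n := by
      funext n; simp only [hedef]; ring
    rw [this, hcdef]
    exact he.add (hA.const_mul 2)
  -- squeeze for ‖y n - p‖
  have hdshift : Tendsto (fun n => d (n+1)) atTop (nhds c) := hd.comp (tendsto_add_atTop_nat 1)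
  have hyp_tend : Tendsto (fun n => ‖y n - p‖) atTop (nhds c) := by
    have hlow : Tendsto (fun n => d (n+1) - a n) atTop (nhds (c - 0)) := hdshift.sub halim
    have hhigh : Tendsto (fun n => d n + a n) atTop (nhds (c + 0)) := hd.add halim
    rw [sub_zero] at hlow
    rw [add_zero] at hhigh
    apply tendsto_of_tendsto_of_tendsto_of_le_of_le hlow hhigh
    · intro n; simp only; linarith [d2 n]
    · intro n; simp only; exact d1 n
  have hU : Tendsto (fun n => d n + a n) atTop (nhds c) := by
    have := hd.add halim; rwa [add_zero] at this
  -- apply Schu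
  have hcombo : Tendsto (fun n => ‖α n • (T^[n] (x n) - p) + (1 - α n) • (x n - p)‖)
      atTop (nhds c) := by
    apply hyp_tend.congr
    intro n
    congr 1
    rw [hy n]; module
  have hres := schu (fun n => T^[n] (x n) - p) (fun n => x n - p) α a' b' ha' hb' hα c
    (fun n => d n + a n) d hub (fun n => le_rfl) hU hd hcombo
  apply hres.congr
  intro n
  rw [sub_sub_sub_cancel_right, norm_sub_rev]
end

section
/- Let C be a nonempty compact convex subset of a real uniformly convex Banach space X, let T : C → C be a uniformly L-Lipschitzian, nearly nonexpansive mapping with respect to {a_n} with Σ_{n=0}^∞ a_n < ∞, let {α_n} satisfy 0 < a ≤ α_n ≤ b < 1 for all n, and let {x_n} be the modified Picard–Mann hybrid iteration y_n = (1 − α_n)x_n + α_n T^n x_n, x_{n+1} = T^n y_n. Then lim_{n→∞} ‖x_n − T x_n‖ = 0. -/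
/-!
Minimizing the asymptotic radius `w ↦ limsup ‖Tⁿ q - w‖` over the compact set `C` gives a point
`p`; uniform convexity and near nonexpansiveness force `Tᵐ p → p`, so `p` is a fixed point by
continuity. Along the iteration `‖xₙ - p‖` grows by at most `2 aₙ` per step, hence converges, and
`‖yₙ - p‖` has the same limit `l`. Since `yₙ - p` is a convex combination, with weights bounded away
from `0` and `1`, of `Tⁿ xₙ - p` and `xₙ - p`, whose norms are asymptotically at most `l`, uniform
convexity (Schu's lemma) gives `‖Tⁿ xₙ - xₙ‖ → 0`, hence `‖xₙ₊₁ - xₙ‖ → 0`, and the uniform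
Lipschitz bound turns this into `‖xₙ - T xₙ‖ → 0`.
-/

open Filter Topology Function Set Bornology

section

variable {X : Type*} [NormedAddCommGroup X]

/-- Rescaling to radius `R` makes the modulus of convexity uniform over all radii `s ≤ R`. -/
lemma exists_forall_closed_ball_dist_add_le_two_mul_sub_of_le [NormedSpace ℝ X]
    [UniformConvexSpace X] {ε : ℝ} (hε : 0 < ε) {R : ℝ} (hR : 0 < R) :
    ∃ δ, 0 < δ ∧ ∀ s ≤ R, ∀ ⦃u : X⦄, ‖u‖ ≤ s → ∀ ⦃v⦄, ‖v‖ ≤ s → ε ≤ ‖u - v‖ →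
      ‖u + v‖ ≤ 2 * s - δ := by
  obtain ⟨δ, hδ, h⟩ := exists_forall_closed_ball_dist_add_le_two_mul_sub X hε R
  refine ⟨δ * ε / (2 * R), by positivity, fun s hsR u hu v hv huv => ?_⟩
  have hεs : ε ≤ 2 * s := huv.trans ((norm_sub_le u v).trans (by linarith))
  have hs : 0 < s := by linarith
  have ht : 1 ≤ R / s := (one_le_div hs).2 hsR
  have hnorm : ∀ w : X, ‖(R / s) • w‖ = R / s * ‖w‖ := fun w => by
    rw [norm_smul, Real.norm_of_nonneg (by positivity)]
  have hscaled := h (x := (R / s) • u) (y := (R / s) • v)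
    (by rw [hnorm, div_mul_eq_mul_div, div_le_iff₀ hs]; nlinarith)
    (by rw [hnorm, div_mul_eq_mul_div, div_le_iff₀ hs]; nlinarith)
    (by rw [← smul_sub, hnorm]; nlinarith [norm_nonneg (u - v)])
  rw [← smul_add, hnorm, div_mul_eq_mul_div, div_le_iff₀ hs] at hscaled
  rw [le_sub_iff_add_le, ← mul_le_mul_iff_of_pos_left hR]
  have : δ * ε / 2 ≤ δ * s := by nlinarith
  field_simp
  nlinarith

lemma norm_smul_add_smul_le_sub [NormedSpace ℝ X] {u v : X} {s δ t : ℝ} (hu : ‖u‖ ≤ s)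
    (hv : ‖v‖ ≤ s) (huv : ‖u + v‖ ≤ 2 * s - δ) (hδ : 0 ≤ δ) (ht₀ : 0 ≤ t) (ht₁ : t ≤ 1) :
    ‖t • u + (1 - t) • v‖ ≤ s - min t (1 - t) * δ := by
  have hnorm : ∀ {c : ℝ} (w : X), 0 ≤ c → ‖c • w‖ = c * ‖w‖ := fun w hc => by
    rw [norm_smul, Real.norm_of_nonneg hc]
  rcases le_total t (1 / 2) with ht | ht
  · calc ‖t • u + (1 - t) • v‖ = ‖t • (u + v) + (1 - 2 * t) • v‖ := by congr 1; module
      _ ≤ t * ‖u + v‖ + (1 - 2 * t) * ‖v‖ := by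
        grw [norm_add_le, hnorm _ ht₀, hnorm _ (by linarith)]
      _ ≤ t * (2 * s - δ) + (1 - 2 * t) * s := by gcongr; linarith
      _ ≤ s - min t (1 - t) * δ := by nlinarith [min_le_left t (1 - t)]
  · calc ‖t • u + (1 - t) • v‖ = ‖(1 - t) • (u + v) + (2 * t - 1) • u‖ := by congr 1; module
      _ ≤ (1 - t) * ‖u + v‖ + (2 * t - 1) * ‖u‖ := by
        grw [norm_add_le, hnorm _ (by linarith), hnorm _ (by linarith)]
      _ ≤ (1 - t) * (2 * s - δ) + (2 * t - 1) * s := by gcongr; linarith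
      _ ≤ s - min t (1 - t) * δ := by nlinarith [min_le_right t (1 - t)]

lemma exists_tendsto_of_le_add_of_summable {c e : ℕ → ℝ} (hc : ∀ n, 0 ≤ c n)
    (he : ∀ n, 0 ≤ e n) (hsum : Summable e) (hstep : ∀ n, c (n + 1) ≤ c n + e n) :
    ∃ l, Tendsto c atTop (𝓝 l) := by
  set s : ℕ → ℝ := fun n => ∑ i ∈ Finset.range n, e i
  have hanti : Antitone fun n => c n - s n := antitone_nat_of_succ_le fun n => by
    simp only [s, Finset.sum_range_succ]
    linarith [hstep n]
  have hbdd : BddBelow (range fun n => c n - s n) := by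
    refine ⟨-∑' i, e i, forall_mem_range.2 fun n => ?_⟩
    linarith [hc n, hsum.sum_le_tsum (Finset.range n) fun i _ => he i]
  exact ⟨_, by simpa [s] using (tendsto_atTop_ciInf hanti hbdd).add hsum.hasSum.tendsto_sum_nat⟩

/-- Schu's lemma. -/
theorem tendsto_norm_sub_of_tendsto_norm_smul_add_smul [NormedSpace ℝ X] [UniformConvexSpace X]
    {u v : ℕ → X} {c t : ℕ → ℝ} {l a b : ℝ} (ha : 0 < a) (hb : b < 1)
    (ht : ∀ n, a ≤ t n ∧ t n ≤ b) (hu : ∀ n, ‖u n‖ ≤ c n) (hv : ∀ n, ‖v n‖ ≤ c n)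
    (hc : Tendsto c atTop (𝓝 l))
    (huv : Tendsto (fun n => ‖t n • u n + (1 - t n) • v n‖) atTop (𝓝 l)) :
    Tendsto (fun n => ‖u n - v n‖) atTop (𝓝 0) := by
  rcases (ge_of_tendsto' hc fun n => (norm_nonneg _).trans (hu n)).eq_or_lt with rfl | hl
  · refine squeeze_zero (fun n => norm_nonneg _)
      (fun n => (norm_sub_le _ _).trans (add_le_add (hu n) (hv n))) ?_
    simpa using hc.add hc
  refine tendsto_order.2 ⟨fun b hb => Eventually.of_forall fun n => hb.trans_le (norm_nonneg _),
    fun ε hε => ?_⟩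
  obtain ⟨δ, hδ, hUC⟩ :=
    exists_forall_closed_ball_dist_add_le_two_mul_sub_of_le (X := X) hε (by positivity : 0 < 2 * l)
  set γ := min a (1 - b) * δ
  have hγ : 0 < γ := mul_pos (lt_min ha (by linarith)) hδ
  filter_upwards [hc.eventually (gt_mem_nhds (lt_add_of_pos_right l (lt_min hl (half_pos hγ)))),
    huv.eventually (lt_mem_nhds (by linarith : l - γ / 2 < l))] with n hcn hn
  by_contra! hfar
  have hsum := hUC (c n) (by linarith [min_le_left l (γ / 2)]) (hu n) (hv n) hfar
  have hcomb := norm_smul_add_smul_le_sub (hu n) (hv n) hsum hδ.le (ha.le.trans (ht n).1)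
    (by linarith [(ht n).2])
  have : γ ≤ min (t n) (1 - t n) * δ :=
    mul_le_mul_of_nonneg_right (min_le_min (ht n).1 (by linarith [(ht n).2])) hδ.le
  linarith [min_le_right l (γ / 2)]

noncomputable def asympRadius (z : ℕ → X) (w : X) : ℝ :=
  limsup (fun n => ‖z n - w‖) atTop

section AsymptoticRadius

variable {z : ℕ → X}

lemma isBoundedUnder_norm_sub (hz : IsBounded (range z)) (w : X) :
    IsBoundedUnder (· ≤ ·) atTop fun n => ‖z n - w‖ := by
  obtain ⟨R, hR⟩ := hz.exists_norm_le
  exact isBoundedUnder_of ⟨R + ‖w‖, fun n => (norm_sub_le _ _).trans (by grw [hR _ ⟨n, rfl⟩])⟩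

lemma isCoboundedUnder_norm_sub (w : X) :
    IsCoboundedUnder (· ≤ ·) atTop fun n => ‖z n - w‖ :=
  isCoboundedUnder_le_of_le atTop fun _ => norm_nonneg _

lemma asympRadius_nonneg (hz : IsBounded (range z)) (w : X) : 0 ≤ asympRadius z w :=
  le_limsup_of_frequently_le (Frequently.of_forall fun _ => norm_nonneg _)
    (isBoundedUnder_norm_sub hz w)

lemma asympRadius_comp_add (m : ℕ) (w : X) :
    asympRadius (fun n => z (n + m)) w = asympRadius z w :=
  limsup_nat_add (fun n => ‖z n - w‖) m

lemma asympRadius_le_of_forall_le {z' : ℕ → X} (hz' : IsBounded (range z')) {w w' : X} {c : ℝ}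
    (h : ∀ n, ‖z n - w‖ ≤ ‖z' n - w'‖ + c) : asympRadius z w ≤ asympRadius z' w' + c := by
  rw [asympRadius, asympRadius, ← limsup_add_const atTop _ _ (isBoundedUnder_norm_sub hz' w')
    (isCoboundedUnder_norm_sub w')]
  exact limsup_le_limsup (Eventually.of_forall h) (isCoboundedUnder_norm_sub w)
    (isBoundedUnder_le_add (isBoundedUnder_norm_sub hz' w') isBoundedUnder_const)

lemma lipschitzWith_asympRadius (hz : IsBounded (range z)) : LipschitzWith 1 (asympRadius z) :=
  LipschitzWith.of_le_add (f := asympRadius z) fun w w' =>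
    asympRadius_le_of_forall_le hz fun n => by
      rw [dist_eq_norm' w w']
      exact norm_sub_le_norm_sub_add_norm_sub _ _ _

lemma norm_sub_le_asympRadius_add (hz : IsBounded (range z)) (v w : X) :
    ‖v - w‖ ≤ asympRadius z v + asympRadius z w := by
  have hpos : ∀ w : X, IsBoundedUnder (· ≥ ·) atTop fun n => ‖z n - w‖ := fun w =>
    isBoundedUnder_of ⟨0, fun _ => norm_nonneg _⟩
  refine le_trans ?_ (limsup_add_le (hpos v) (isBoundedUnder_norm_sub hz v)
    (isCoboundedUnder_norm_sub w) (isBoundedUnder_norm_sub hz w))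
  refine le_limsup_of_frequently_le (Frequently.of_forall fun n => ?_)
    (isBoundedUnder_le_add (isBoundedUnder_norm_sub hz v) (isBoundedUnder_norm_sub hz w))
  show ‖v - w‖ ≤ ‖z n - v‖ + ‖z n - w‖
  rw [norm_sub_rev (z n) v]
  exact norm_sub_le_norm_sub_add_norm_sub _ _ _

lemma exists_asympRadius_midpoint_le [NormedSpace ℝ X] [UniformConvexSpace X]
    (hz : IsBounded (range z)) {ε R : ℝ} (hε : 0 < ε) (hR : 0 < R) :
    ∃ δ, 0 < δ ∧ ∀ s ≤ R, ∀ u v : X, asympRadius z u < s → asympRadius z v < s →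
      ε ≤ ‖u - v‖ → asympRadius z (midpoint ℝ u v) ≤ s - δ / 2 := by
  obtain ⟨δ, hδ, hUC⟩ := exists_forall_closed_ball_dist_add_le_two_mul_sub_of_le (X := X) hε hR
  refine ⟨δ, hδ, fun s hsR u v hu hv huv => limsup_le_of_le (isCoboundedUnder_norm_sub _) ?_⟩
  filter_upwards [eventually_lt_of_limsup_lt hu (isBoundedUnder_norm_sub hz u),
    eventually_lt_of_limsup_lt hv (isBoundedUnder_norm_sub hz v)] with n hun hvn
  have hsplit : z n - midpoint ℝ u v = (2⁻¹ : ℝ) • ((z n - v) + (z n - u)) := by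
    rw [midpoint_eq_smul_add]; simp only [invOf_eq_inv]; module
  have := hUC s hsR hvn.le hun.le (by rwa [sub_sub_sub_cancel_left])
  rw [hsplit, norm_smul, Real.norm_of_nonneg (by norm_num)]
  linarith

end AsymptoticRadius

section FixedPoint

variable {C : Set X} {T : X → X} {a : ℕ → ℝ}

lemma asympRadius_orbit_iterate_le (hT : MapsTo T C C)
    (hTa : ∀ x ∈ C, ∀ y ∈ C, ∀ n, 1 ≤ n → ‖T^[n] x - T^[n] y‖ ≤ ‖x - y‖ + a n)
    {q p : X} (hq : q ∈ C) (hp : p ∈ C) (hz : IsBounded (range fun n => T^[n] q)) {m : ℕ}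
    (hm : 1 ≤ m) :
    asympRadius (fun n => T^[n] q) (T^[m] p) ≤ asympRadius (fun n => T^[n] q) p + a m := by
  rw [← asympRadius_comp_add m]
  refine asympRadius_le_of_forall_le hz fun n => ?_
  rw [add_comm n m, iterate_add_apply]
  exact hTa _ (hT.iterate n hq) p hp m hm

lemma tendsto_iterate_of_isMinOn_asympRadius [NormedSpace ℝ X] [UniformConvexSpace X]
    (hCcv : Convex ℝ C) (hT : MapsTo T C C) (ha : Tendsto a atTop (𝓝 0))
    (hTa : ∀ x ∈ C, ∀ y ∈ C, ∀ n, 1 ≤ n → ‖T^[n] x - T^[n] y‖ ≤ ‖x - y‖ + a n)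
    {q p : X} (hq : q ∈ C) (hp : p ∈ C) (hz : IsBounded (range fun n => T^[n] q))
    (hmin : IsMinOn (asympRadius fun n => T^[n] q) C p) :
    Tendsto (fun m => T^[m] p) atTop (𝓝 p) := by
  set r := asympRadius (fun n => T^[n] q) p
  have hbound := fun m (hm : 1 ≤ m) => asympRadius_orbit_iterate_le hT hTa hq hp hz hm
  refine Metric.tendsto_nhds.2 fun ε hε => ?_
  rcases (asympRadius_nonneg hz p).eq_or_lt with hr | hr
  · filter_upwards [ha.eventually (gt_mem_nhds hε), eventually_ge_atTop 1] with m ham hm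
    rw [dist_eq_norm]
    linarith [norm_sub_le_asympRadius_add hz (T^[m] p) p, hbound m hm]
  · obtain ⟨δ, hδ, hmid⟩ := exists_asympRadius_midpoint_le hz hε (by positivity : 0 < 2 * r)
    -- `η ≤ r` keeps the radius `r + η` below `2 * r`; `η < δ / 2` puts the midpoint below `r`
    set η := min r (δ / 4)
    have hη : 0 < η := by positivity
    filter_upwards [ha.eventually (gt_mem_nhds hη), eventually_ge_atTop 1] with m ham hm
    by_contra! hfar
    rw [dist_eq_norm] at hfar
    have hcenter := hmid (r + η) (by linarith [min_le_left r (δ / 4)]) (T^[m] p) p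
      (by linarith [hbound m hm]) (by linarith) hfar
    have := isMinOn_iff.1 hmin _ (hCcv.midpoint_mem (hT.iterate m hp) hp)
    linarith [min_le_right r (δ / 4)]

theorem exists_fixedPoint_of_nearlyNonexpansive [NormedSpace ℝ X] [UniformConvexSpace X]
    (hC : C.Nonempty) (hCcp : IsCompact C) (hCcv : Convex ℝ C) (hT : MapsTo T C C)
    (hTc : ContinuousOn T C) (ha : Tendsto a atTop (𝓝 0))
    (hTa : ∀ x ∈ C, ∀ y ∈ C, ∀ n, 1 ≤ n → ‖T^[n] x - T^[n] y‖ ≤ ‖x - y‖ + a n) :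
    ∃ p ∈ C, IsFixedPt T p := by
  obtain ⟨q, hq⟩ := hC
  have hz : IsBounded (range fun n => T^[n] q) :=
    hCcp.isBounded.subset (range_subset_iff.2 fun n => hT.iterate n hq)
  obtain ⟨p, hp, hmin⟩ :=
    hCcp.exists_isMinOn ⟨q, hq⟩ (lipschitzWith_asympRadius hz).continuous.continuousOn
  have hiter := tendsto_iterate_of_isMinOn_asympRadius hCcv hT ha hTa hq hp hz hmin
  have hT_lim : Tendsto (fun m => T (T^[m] p)) atTop (𝓝 (T p)) :=
    (hTc p hp).tendsto.comp
      (tendsto_nhdsWithin_iff.2 ⟨hiter, Eventually.of_forall fun m => hT.iterate m hp⟩)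
  have hT_lim' : Tendsto (fun m => T (T^[m] p)) atTop (𝓝 p) := by
    simpa only [← iterate_succ_apply'] using (tendsto_add_atTop_iff_nat 1).2 hiter
  exact ⟨p, hp, tendsto_nhds_unique hT_lim hT_lim'⟩

end FixedPoint

section PicardMann

variable {C : Set X} {T : X → X} {a : ℕ → ℝ} {p : X}

lemma norm_iterate_sub_le_of_isFixedPt (hp : p ∈ C) (hTp : IsFixedPt T p)
    (hTa : ∀ x ∈ C, ∀ y ∈ C, ∀ n, ‖T^[n] x - T^[n] y‖ ≤ ‖x - y‖ + a n) {u : X} (hu : u ∈ C)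
    (n : ℕ) : ‖T^[n] u - p‖ ≤ ‖u - p‖ + a n := by
  simpa only [(hTp.iterate n).eq] using hTa u hu p hp n

lemma norm_mann_sub_le_of_isFixedPt [NormedSpace ℝ X] (hp : p ∈ C) (hTp : IsFixedPt T p)
    (hTa : ∀ x ∈ C, ∀ y ∈ C, ∀ n, ‖T^[n] x - T^[n] y‖ ≤ ‖x - y‖ + a n) {u : X} (hu : u ∈ C)
    (n : ℕ) {t : ℝ} (ht₀ : 0 ≤ t) (ht₁ : t ≤ 1) :
    ‖(1 - t) • u + t • T^[n] u - p‖ ≤ ‖u - p‖ + a n := by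
  have ha : 0 ≤ a n := by simpa using hTa p hp p hp n
  calc ‖(1 - t) • u + t • T^[n] u - p‖ = ‖(1 - t) • (u - p) + t • (T^[n] u - p)‖ := by
        congr 1; module
    _ ≤ (1 - t) * ‖u - p‖ + t * ‖T^[n] u - p‖ := by
        grw [norm_add_le, norm_smul, norm_smul, Real.norm_of_nonneg ht₀,
          Real.norm_of_nonneg (sub_nonneg.2 ht₁)]
    _ ≤ (1 - t) * ‖u - p‖ + t * (‖u - p‖ + a n) := by
        grw [norm_iterate_sub_le_of_isFixedPt hp hTp hTa hu n]
    _ ≤ ‖u - p‖ + a n := by nlinarith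

lemma norm_iterate_mann_sub_le [NormedSpace ℝ X]
    (hTa : ∀ x ∈ C, ∀ y ∈ C, ∀ n, ‖T^[n] x - T^[n] y‖ ≤ ‖x - y‖ + a n)
    {u : X} (hu : u ∈ C) (n : ℕ) {t : ℝ} (ht₀ : 0 ≤ t) (ht₁ : t ≤ 1)
    (hw : (1 - t) • u + t • T^[n] u ∈ C) :
    ‖T^[n] ((1 - t) • u + t • T^[n] u) - u‖ ≤ 2 * ‖T^[n] u - u‖ + a n := by
  have hstep : ‖(1 - t) • u + t • T^[n] u - u‖ ≤ ‖T^[n] u - u‖ := by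
    rw [show (1 - t) • u + t • T^[n] u - u = t • (T^[n] u - u) by module, norm_smul,
      Real.norm_of_nonneg ht₀]
    exact mul_le_of_le_one_left (norm_nonneg _) ht₁
  calc ‖T^[n] ((1 - t) • u + t • T^[n] u) - u‖
      ≤ ‖T^[n] ((1 - t) • u + t • T^[n] u) - T^[n] u‖ + ‖T^[n] u - u‖ :=
        norm_sub_le_norm_sub_add_norm_sub _ _ _
    _ ≤ 2 * ‖T^[n] u - u‖ + a n := by linarith [hTa _ hw u hu n]

theorem tendsto_norm_iterate_sub_of_picardMann [NormedSpace ℝ X] [UniformConvexSpace X]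
    (hp : p ∈ C) (hTp : IsFixedPt T p)
    (hTa : ∀ x ∈ C, ∀ y ∈ C, ∀ n, ‖T^[n] x - T^[n] y‖ ≤ ‖x - y‖ + a n) (hsum : Summable a)
    {α : ℕ → ℝ} {a' b' : ℝ} (ha' : 0 < a') (hb' : b' < 1)
    (hα : ∀ n, a' ≤ α n ∧ α n ≤ b') {x y : ℕ → X} (hxC : ∀ n, x n ∈ C) (hyC : ∀ n, y n ∈ C)
    (hy : ∀ n, y n = (1 - α n) • x n + α n • T^[n] (x n)) (hx : ∀ n, x (n + 1) = T^[n] (y n)) :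
    Tendsto (fun n => ‖T^[n] (x n) - x n‖) atTop (𝓝 0) := by
  have ha : ∀ n, 0 ≤ a n := fun n => by simpa using hTa p hp p hp n
  have hα₀ : ∀ n, 0 ≤ α n := fun n => ha'.le.trans (hα n).1
  have hα₁ : ∀ n, α n ≤ 1 := fun n => (hα n).2.trans hb'.le
  have hyp : ∀ n, ‖y n - p‖ ≤ ‖x n - p‖ + a n := fun n => by
    rw [hy n]; exact norm_mann_sub_le_of_isFixedPt hp hTp hTa (hxC n) n (hα₀ n) (hα₁ n)
  have hxp : ∀ n, ‖x (n + 1) - p‖ ≤ ‖y n - p‖ + a n := fun n => by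
    rw [hx n]; exact norm_iterate_sub_le_of_isFixedPt hp hTp hTa (hyC n) n
  obtain ⟨l, hl⟩ := exists_tendsto_of_le_add_of_summable (fun n => norm_nonneg (x n - p))
    (fun n => mul_nonneg zero_le_two (ha n)) (hsum.mul_left 2)
    fun n => by linarith [hxp n, hyp n]
  have ha_lim := hsum.tendsto_atTop_zero
  have hyl : Tendsto (fun n => ‖y n - p‖) atTop (𝓝 l) :=
    tendsto_of_tendsto_of_tendsto_of_le_of_le
      (by simpa using ((tendsto_add_atTop_iff_nat 1).2 hl).sub ha_lim)
      (by simpa using hl.add ha_lim)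
      (fun n => by linarith [hxp n]) hyp
  refine (tendsto_norm_sub_of_tendsto_norm_smul_add_smul ha' hb' hα
    (fun n => norm_iterate_sub_le_of_isFixedPt hp hTp hTa (hxC n) n)
    (fun n => le_add_of_nonneg_right (ha n)) (by simpa using hl.add ha_lim) ?_).congr
    fun n => by rw [sub_sub_sub_cancel_right]
  refine hyl.congr fun n => ?_
  rw [hy n]
  congr 1
  module

end PicardMann

section UniformlyLipschitz

variable {C : Set X} {T : X → X} {L : ℝ}

lemma norm_sub_apply_le (hT : MapsTo T C C) (hL : 0 ≤ L)
    (hTL : ∀ x ∈ C, ∀ y ∈ C, ∀ n, 1 ≤ n → ‖T^[n] x - T^[n] y‖ ≤ L * ‖x - y‖)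
    {u v : X} (hu : u ∈ C) (hv : v ∈ C) {n : ℕ} (hn : 1 ≤ n) :
    ‖v - T v‖ ≤ ‖T^[n + 1] v - v‖ + L * ((L + 1) * ‖v - u‖ + ‖T^[n] u - u‖) := by
  have hTv : ‖T^[n + 1] v - T v‖ ≤ L * ‖T^[n] v - v‖ := by
    simpa [iterate_succ_apply'] using hTL _ (hT.iterate n hv) v hv 1 le_rfl
  have hnv : ‖T^[n] v - v‖ ≤ L * ‖v - u‖ + ‖T^[n] u - u‖ + ‖v - u‖ := by
    calc ‖T^[n] v - v‖ ≤ ‖T^[n] v - T^[n] u‖ + ‖T^[n] u - u‖ + ‖u - v‖ := by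
          simpa only [dist_eq_norm] using dist_triangle4 (T^[n] v) (T^[n] u) u v
      _ ≤ L * ‖v - u‖ + ‖T^[n] u - u‖ + ‖v - u‖ := by
        rw [norm_sub_rev u v]; grw [hTL v hv u hu n hn]
  calc ‖v - T v‖ ≤ ‖v - T^[n + 1] v‖ + ‖T^[n + 1] v - T v‖ :=
        norm_sub_le_norm_sub_add_norm_sub _ _ _
    _ ≤ ‖T^[n + 1] v - v‖ + L * (L * ‖v - u‖ + ‖T^[n] u - u‖ + ‖v - u‖) := by
      rw [norm_sub_rev v]; grw [hTv, hnv]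
    _ = ‖T^[n + 1] v - v‖ + L * ((L + 1) * ‖v - u‖ + ‖T^[n] u - u‖) := by ring

theorem tendsto_norm_sub_apply_of_tendsto_norm_iterate_sub (hT : MapsTo T C C) (hL : 0 ≤ L)
    (hTL : ∀ x ∈ C, ∀ y ∈ C, ∀ n, 1 ≤ n → ‖T^[n] x - T^[n] y‖ ≤ L * ‖x - y‖)
    {x : ℕ → X} (hxC : ∀ n, x n ∈ C) (hd : Tendsto (fun n => ‖T^[n] (x n) - x n‖) atTop (𝓝 0))
    (hxx : Tendsto (fun n => ‖x (n + 1) - x n‖) atTop (𝓝 0)) :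
    Tendsto (fun n => ‖x n - T (x n)‖) atTop (𝓝 0) := by
  refine (tendsto_add_atTop_iff_nat 1).1 <|
    squeeze_zero' (Eventually.of_forall fun n => norm_nonneg _) ((eventually_ge_atTop 1).mono
      fun n hn => norm_sub_apply_le hT hL hTL (hxC n) (hxC (n + 1)) hn) ?_
  simpa using
    ((tendsto_add_atTop_iff_nat 1).2 hd).add (((hxx.const_mul (L + 1)).add hd).const_mul L)

end UniformlyLipschitz

end

theorem stmt_10_general
    {X : Type*} [NormedAddCommGroup X] [NormedSpace ℝ X]
    [UniformConvexSpace X]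
    (C : Set X) (hC : C.Nonempty) (hCcp : IsCompact C) (hCcv : Convex ℝ C)
    (T : X → X) (hT : Set.MapsTo T C C)
    (L : ℝ) (hL : 0 < L)
    (hTL : ∀ x ∈ C, ∀ y ∈ C, ∀ n, 1 ≤ n → ‖T^[n] x - T^[n] y‖ ≤ L * ‖x - y‖)
    (a : ℕ → ℝ) (ha : ∀ n, a n ∈ Set.Ico (0 : ℝ) 1)
    (halim : Filter.Tendsto a Filter.atTop (nhds 0))
    (hasum : Summable a)
    (hTa : ∀ x ∈ C, ∀ y ∈ C, ∀ n, 1 ≤ n → ‖T^[n] x - T^[n] y‖ ≤ ‖x - y‖ + a n)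
    (α : ℕ → ℝ) (a' b' : ℝ) (ha' : 0 < a') (hb' : b' < 1)
    (hα : ∀ n, a' ≤ α n ∧ α n ≤ b')
    (x y : ℕ → X)
    (hxC : ∀ n, x n ∈ C) (hyC : ∀ n, y n ∈ C)
    (hy : ∀ n, y n = (1 - α n) • x n + α n • T^[n] (x n))
    (hx : ∀ n, x (n + 1) = T^[n] (y n)) :
    Filter.Tendsto (fun n => ‖x n - T (x n)‖) Filter.atTop (nhds 0) := by
  have hTa₀ : ∀ u ∈ C, ∀ v ∈ C, ∀ n, ‖T^[n] u - T^[n] v‖ ≤ ‖u - v‖ + a n := by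
    rintro u hu v hv (_ | n)
    · simpa using (ha 0).1
    · exact hTa u hu v hv _ (Nat.le_add_left 1 n)
  have hTc : ContinuousOn T C := (LipschitzOnWith.of_dist_le' fun u hu v hv => by
    simpa [dist_eq_norm] using hTL u hu v hv 1 le_rfl).continuousOn
  obtain ⟨p, hp, hTp⟩ := exists_fixedPoint_of_nearlyNonexpansive hC hCcp hCcv hT hTc halim hTa
  have hd := tendsto_norm_iterate_sub_of_picardMann hp hTp hTa₀ hasum ha' hb' hα hxC hyC hy hx
  have hxx : Tendsto (fun n => ‖x (n + 1) - x n‖) atTop (𝓝 0) := by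
    refine squeeze_zero (fun n => norm_nonneg _) (fun n => ?_)
      (by simpa using (hd.const_mul 2).add halim)
    rw [hx n, hy n]
    exact norm_iterate_mann_sub_le hTa₀ (hxC n) n (ha'.le.trans (hα n).1)
      ((hα n).2.trans hb'.le) (hy n ▸ hyC n)
  exact tendsto_norm_sub_apply_of_tendsto_norm_iterate_sub hT hL.le hTL hxC hd hxx

/-- Relation (3.10): `‖x n - T (x n)‖ → 0`. -/
theorem stmt_10
    {X : Type*} [NormedAddCommGroup X] [NormedSpace ℝ X]
    [CompleteSpace X] [UniformConvexSpace X]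
    (C : Set X) (hC : C.Nonempty) (hCcp : IsCompact C) (hCcv : Convex ℝ C)
    (T : X → X) (hT : Set.MapsTo T C C)
    (L : ℝ) (hL : 0 < L)
    (hTL : ∀ x ∈ C, ∀ y ∈ C, ∀ n, 1 ≤ n → ‖T^[n] x - T^[n] y‖ ≤ L * ‖x - y‖)
    (a : ℕ → ℝ) (ha : ∀ n, a n ∈ Set.Ico (0 : ℝ) 1)
    (halim : Filter.Tendsto a Filter.atTop (nhds 0))
    (hasum : Summable a)
    (hTa : ∀ x ∈ C, ∀ y ∈ C, ∀ n, 1 ≤ n → ‖T^[n] x - T^[n] y‖ ≤ ‖x - y‖ + a n)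
    (α : ℕ → ℝ) (a' b' : ℝ) (ha' : 0 < a') (hb' : b' < 1)
    (hα : ∀ n, a' ≤ α n ∧ α n ≤ b')
    (x y : ℕ → X)
    (hx0 : x 0 ∈ C)
    (hxC : ∀ n, x n ∈ C) (hyC : ∀ n, y n ∈ C)
    (hy : ∀ n, y n = (1 - α n) • x n + α n • T^[n] (x n))
    (hx : ∀ n, x (n + 1) = T^[n] (y n)) :
    Filter.Tendsto (fun n => ‖x n - T (x n)‖) Filter.atTop (nhds 0) :=
  stmt_10_general C hC hCcp hCcv T hT L hL hTL a ha halim hasum hTa α a' b' ha' hb' hα x y hxC hyC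
    hy hx
end

section
/- Let C be a nonempty compact convex subset of a real uniformly convex Banach space X, let T : C → C be a uniformly L-Lipschitzian, nearly nonexpansive mapping with respect to {a_n} with Σ_{n=0}^∞ a_n < ∞, let {α_n} satisfy 0 < a ≤ α_n ≤ b < 1 for all n, and let {x_n} be the modified Picard–Mann hybrid iteration y_n = (1 − α_n)x_n + α_n T^n x_n, x_{n+1} = T^n y_n. Then {x_n} converges strongly (in norm) to a fixed point of T. -/
/-!
A fixed point exists: approximate fixed points of the iterates `T^[n]` accumulate at a point `q`
with `T^[φ k] q → q`. The limit `S` of `T^[φ k]` along an ultrafilter is nonexpansive, commutes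
with `T` and fixes `q`; its fixed points form a nonempty compact set, convex by strict convexity,
on which `T` is nonexpansive and therefore has a fixed point `p` (Browder, compact case).

For every fixed point `p`, `‖x n - p‖` decreases up to the summable errors `2 a n`, so it
converges, and so do `‖y n - p‖` and `‖T^[n] (x n) - p‖`, to the same limit. Uniform convexity
(Schu's lemma) then gives `‖x n - T^[n] (x n)‖ → 0`, and the uniform Lipschitz bound upgrades this
to `‖x n - T (x n)‖ → 0`. Hence a cluster point `q` of `(x n)` is fixed by `T`; as `‖x n - q‖`
converges and tends to `0` along a subsequence, `x n → q`.
-/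

open Filter Set Function Topology

lemma IsCompact.exists_mapsTo_forall_tendsto {Y ι : Type*} [TopologicalSpace Y] {C : Set Y}
    (hC : IsCompact C) (U : Ultrafilter ι) {f : ι → Y → Y} (hf : ∀ i, MapsTo (f i) C C) :
    ∃ S : Y → Y, MapsTo S C C ∧ ∀ x ∈ C, Tendsto (fun i => f i x) U (𝓝 (S x)) := by
  have h : ∀ x, ∃ p, x ∈ C → p ∈ C ∧ Tendsto (fun i => f i x) U (𝓝 p) := fun x => by
    by_cases hx : x ∈ C
    · obtain ⟨p, hpC, hp⟩ := hC.ultrafilter_le_nhds' (U.map fun i => f i x)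
        (Ultrafilter.mem_map.2 (univ_mem' fun i => hf i hx))
      exact ⟨p, fun _ => ⟨hpC, hp⟩⟩
    · exact ⟨x, fun h => absurd h hx⟩
  choose S hS using h
  exact ⟨S, fun x hx => (hS x hx).1, fun x hx => (hS x hx).2⟩

lemma exists_tendsto_of_le_add_of_summable_s11 {u b : ℕ → ℝ} (hu : ∀ n, 0 ≤ u n)
    (hb0 : ∀ n, 0 ≤ b n) (hb : Summable b) (h : ∀ n, u (n + 1) ≤ u n + b n) :
    ∃ ℓ, Tendsto u atTop (𝓝 ℓ) := by
  -- adding the tail of `∑ b` makes `u` antitone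
  set r : ℕ → ℝ := fun n => ∑' k, b (k + n)
  have hr : ∀ n, r n = b n + r (n + 1) := fun n => by
    rw [show r n = _ from ((summable_nat_add_iff n).2 hb).tsum_eq_zero_add, zero_add]
    exact congrArg _ (tsum_congr fun k => by rw [add_right_comm, add_assoc])
  have hr0 : ∀ n, 0 ≤ r n := fun n => tsum_nonneg fun k => hb0 _
  have hanti : Antitone (u + r) := antitone_nat_of_succ_le fun n => by
    simp only [Pi.add_apply]; linarith [h n, hr n]
  have hbdd : BddBelow (range (u + r)) :=
    ⟨0, by rintro _ ⟨n, rfl⟩; exact add_nonneg (hu n) (hr0 n)⟩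
  refine ⟨⨅ n, (u + r) n, ?_⟩
  simpa [r] using (tendsto_atTop_ciInf hanti hbdd).sub (tendsto_sum_nat_add b)

section NearlyNonexpansive

variable {X : Type*} [NormedAddCommGroup X] {C : Set X} {T : X → X} {a : ℕ → ℝ}

/-- Unlike in the paper, the bound is also required for `n = 0`, where it just says `0 ≤ a 0`. -/
def NearlyNonexpansiveOn (T : X → X) (C : Set X) (a : ℕ → ℝ) : Prop :=
  ∀ n, ∀ x ∈ C, ∀ y ∈ C, ‖T^[n] x - T^[n] y‖ ≤ ‖x - y‖ + a n

lemma NearlyNonexpansiveOn.of_one_le (ha : ∀ n, 0 ≤ a n)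
    (h : ∀ x ∈ C, ∀ y ∈ C, ∀ n, 1 ≤ n → ‖T^[n] x - T^[n] y‖ ≤ ‖x - y‖ + a n) :
    NearlyNonexpansiveOn T C a := by
  intro n x hx y hy
  rcases Nat.eq_zero_or_pos n with rfl | hn
  · simpa using ha 0
  · exact h x hx y hy n hn

lemma NearlyNonexpansiveOn.nonneg (hTa : NearlyNonexpansiveOn T C a) {p : X} (hp : p ∈ C)
    (n : ℕ) : 0 ≤ a n := by
  simpa using hTa n p hp p hp

lemma continuousOn_of_norm_sub_le_mul {f : X → X} {L : ℝ} (hL : 0 ≤ L)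
    (h : ∀ x ∈ C, ∀ y ∈ C, ‖f x - f y‖ ≤ L * ‖x - y‖) : ContinuousOn f C := by
  refine (LipschitzOnWith.of_dist_le_mul (K := L.toNNReal) fun x hx y hy => ?_).continuousOn
  simpa [dist_eq_norm, Real.coe_toNNReal L hL] using h x hx y hy

lemma norm_sub_le_of_tendsto_of_norm_sub_le_add {ι : Type*} {l : Filter ι} [l.NeBot]
    {f g : ι → X} {x y : X} {b : ι → ℝ} {d : ℝ} (hf : Tendsto f l (𝓝 x))
    (hg : Tendsto g l (𝓝 y)) (hb : Tendsto b l (𝓝 0)) (h : ∀ i, ‖f i - g i‖ ≤ d + b i) :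
    ‖x - y‖ ≤ d := by
  simpa using le_of_tendsto_of_tendsto' (hf.sub hg).norm (tendsto_const_nhds.add hb) h

variable [NormedSpace ℝ X]

lemma exists_smul_norm_sub_le (hne : C.Nonempty) (hcp : IsCompact C)
    (hcv : Convex ℝ C) {S : X → X} (hS : MapsTo S C C) (hSc : ContinuousOn S C) {c : ℝ}
    (hSnear : ∀ x ∈ C, ∀ y ∈ C, ‖S x - S y‖ ≤ ‖x - y‖ + c) {s : ℝ} (hs0 : 0 ≤ s) (hs1 : s ≤ 1) :
    ∃ w ∈ C, s * ‖w - S w‖ ≤ c + s ^ 2 * Metric.diam C := by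
  obtain ⟨x₀, hx₀⟩ := hne
  have hc : 0 ≤ c := by simpa using hSnear x₀ hx₀ x₀ hx₀
  -- `U` shrinks `‖z - U z‖` by the factor `1 - s` up to `c`, so at a minimiser it is `≤ c / s`
  set U : X → X := fun z => s • x₀ + (1 - s) • S z with hU
  have hUC : MapsTo U C C := fun z hz => hcv hx₀ (hS hz) hs0 (by linarith) (by ring)
  have hUc : ContinuousOn U C := continuousOn_const.add (hSc.const_smul _)
  obtain ⟨w, hwC, hmin⟩ :=
    hcp.exists_isMinOn ⟨x₀, hx₀⟩ ((continuousOn_id.sub hUc).norm)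
  have hUw : ‖U w - U (U w)‖ ≤ (1 - s) * (‖w - U w‖ + c) := by
    have : U w - U (U w) = (1 - s) • (S w - S (U w)) := by simp only [hU]; module
    rw [this, norm_smul, Real.norm_of_nonneg (by linarith)]
    exact mul_le_mul_of_nonneg_left (hSnear w hwC (U w) (hUC hwC)) (by linarith)
  have hwU : s * ‖w - U w‖ ≤ c := by
    have hmin' : ‖w - U w‖ ≤ ‖U w - U (U w)‖ := hmin (hUC hwC)
    nlinarith [mul_nonneg hs0 hc]
  have hUS : ‖U w - S w‖ ≤ s * Metric.diam C := by
    have : U w - S w = s • (x₀ - S w) := by simp only [hU]; module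
    rw [this, norm_smul, Real.norm_of_nonneg hs0, ← dist_eq_norm]
    exact mul_le_mul_of_nonneg_left (Metric.dist_le_diam_of_mem hcp.isBounded hx₀ (hS hwC)) hs0
  refine ⟨w, hwC, ?_⟩
  calc s * ‖w - S w‖ ≤ s * (‖w - U w‖ + ‖U w - S w‖) :=
        mul_le_mul_of_nonneg_left (norm_sub_le_norm_sub_add_norm_sub _ _ _) hs0
    _ ≤ c + s ^ 2 * Metric.diam C := by nlinarith

lemma exists_fixedPoint_of_nonexpansiveOn (hne : C.Nonempty) (hcp : IsCompact C)
    (hcv : Convex ℝ C) {S : X → X} (hS : MapsTo S C C)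
    (hS1 : ∀ x ∈ C, ∀ y ∈ C, ‖S x - S y‖ ≤ ‖x - y‖) : ∃ p ∈ C, S p = p := by
  have hSc : ContinuousOn S C := continuousOn_of_norm_sub_le_mul zero_le_one (by simpa using hS1)
  obtain ⟨p, hpC, hmin⟩ := hcp.exists_isMinOn hne ((continuousOn_id.sub hSc).norm)
  refine ⟨p, hpC, (sub_eq_zero.1 (norm_le_zero_iff.1 ?_)).symm⟩
  have hle : ∀ n : ℕ, ‖p - S p‖ ≤ 1 / (n + 1) * Metric.diam C := fun n => by
    have hs : (0 : ℝ) < 1 / (n + 1) := Nat.one_div_pos_of_nat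
    have hs1 : (1 : ℝ) / (n + 1) ≤ 1 := by
      rw [div_le_one (by positivity)]; linarith [n.cast_nonneg (α := ℝ)]
    obtain ⟨w, hwC, hw⟩ := exists_smul_norm_sub_le hne hcp hcv hS hSc (c := 0)
      (by simpa using hS1) hs.le hs1
    have hpw : ‖p - S p‖ ≤ ‖w - S w‖ := hmin hwC
    refine le_of_mul_le_mul_left ?_ hs
    nlinarith
  simpa using ge_of_tendsto' (tendsto_one_div_add_atTop_nhds_zero_nat.mul_const _) hle

lemma Convex.fixedPoints_of_nonexpansiveOn [StrictConvexSpace ℝ X] (hcv : Convex ℝ C) {S : X → X}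
    (hS1 : ∀ x ∈ C, ∀ y ∈ C, ‖S x - S y‖ ≤ ‖x - y‖) :
    Convex ℝ {x ∈ C | S x = x} := by
  rintro x ⟨hxC, hx⟩ y ⟨hyC, hy⟩ s t hs ht hst
  obtain rfl : s = 1 - t := by linarith
  set w := (1 - t) • x + t • y
  have hwC : w ∈ C := hcv hxC hyC hs ht hst
  refine ⟨hwC, ?_⟩
  -- `S w` is as close to `x` and to `y` as `w` is, which pins it to `w` by strict convexity
  have h₁ : dist x (S w) ≤ t * dist x y :=
    calc dist x (S w) = ‖S x - S w‖ := by rw [hx, dist_eq_norm]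
      _ ≤ ‖x - w‖ := hS1 x hxC w hwC
      _ = t * dist x y := by
        rw [dist_eq_norm, ← Real.norm_of_nonneg ht, ← norm_smul]; congr 1; module
  have h₂ : dist (S w) y ≤ (1 - t) * dist x y :=
    calc dist (S w) y = ‖S w - S y‖ := by rw [hy, dist_eq_norm]
      _ ≤ ‖w - y‖ := hS1 w hwC y hyC
      _ = (1 - t) * dist x y := by
        rw [dist_eq_norm, ← Real.norm_of_nonneg hs, ← norm_smul]; congr 1; module
  have h₃ := dist_triangle x (S w) y
  rw [eq_lineMap_of_dist_eq_mul_of_dist_eq_mul (E := X) (x := x) (y := S w) (z := y) (r := t)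
    (by linarith) (by linarith), AffineMap.lineMap_apply_module]

lemma NearlyNonexpansiveOn.exists_tendsto_norm_sub_iterate (hTa : NearlyNonexpansiveOn T C a)
    (hne : C.Nonempty) (hcp : IsCompact C) (hcv : Convex ℝ C) (hT : MapsTo T C C)
    (hTc : ContinuousOn T C) (ha1 : ∀ n, a n ≤ 1) (halim : Tendsto a atTop (𝓝 0)) :
    ∃ z : ℕ → X, (∀ n, z n ∈ C) ∧ Tendsto (fun n => ‖z n - T^[n] (z n)‖) atTop (𝓝 0) := by
  -- `s n ≥ √(a n)` keeps `a n / s n ≤ √(a n)` small while `s n → 0`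
  set s : ℕ → ℝ := fun n => max √(a n) (1 / (n + 1)) with hs
  have hs0 : ∀ n, 0 < s n := fun n => lt_max_of_lt_right Nat.one_div_pos_of_nat
  have hs1 : ∀ n, s n ≤ 1 := fun n => max_le (Real.sqrt_le_one.2 (ha1 n)) <| by
    rw [div_le_one (by positivity)]; linarith [n.cast_nonneg (α := ℝ)]
  have hslim : Tendsto s atTop (𝓝 0) := by
    simpa [hs, one_div] using (Real.continuous_sqrt.tendsto' 0 0 Real.sqrt_zero |>.comp halim).max
      tendsto_one_div_add_atTop_nhds_zero_nat
  have hz : ∀ n, ∃ z ∈ C, ‖z - T^[n] z‖ ≤ √(a n) + s n * Metric.diam C := fun n => by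
    obtain ⟨z, hzC, hz⟩ := exists_smul_norm_sub_le hne hcp hcv (hT.iterate n)
      (hTc.iterate hT n) (hTa n) (hs0 n).le (hs1 n)
    refine ⟨z, hzC, le_of_mul_le_mul_left ?_ (hs0 n)⟩
    have : a n ≤ s n * √(a n) :=
      calc a n = √(a n) * √(a n) := (Real.mul_self_sqrt (hTa.nonneg hne.some_mem n)).symm
        _ ≤ s n * √(a n) := mul_le_mul_of_nonneg_right (le_max_left _ _) (Real.sqrt_nonneg _)
    nlinarith
  choose z hzC hz using hz
  refine ⟨z, hzC, squeeze_zero (fun n => norm_nonneg _) hz ?_⟩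
  simpa using (Real.continuous_sqrt.tendsto' 0 0 Real.sqrt_zero |>.comp halim).add
    (hslim.mul_const (Metric.diam C))

lemma NearlyNonexpansiveOn.exists_tendsto_iterate_self (hTa : NearlyNonexpansiveOn T C a)
    (hne : C.Nonempty) (hcp : IsCompact C) (hcv : Convex ℝ C) (hT : MapsTo T C C)
    (hTc : ContinuousOn T C) (ha1 : ∀ n, a n ≤ 1) (halim : Tendsto a atTop (𝓝 0)) :
    ∃ q ∈ C, ∃ φ : ℕ → ℕ, StrictMono φ ∧ Tendsto (fun k => T^[φ k] q) atTop (𝓝 q) := by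
  obtain ⟨z, hzC, hz⟩ := hTa.exists_tendsto_norm_sub_iterate hne hcp hcv hT hTc ha1 halim
  obtain ⟨q, hqC, φ, hφ, hzq⟩ := hcp.isSeqCompact hzC
  refine ⟨q, hqC, φ, hφ, tendsto_iff_norm_sub_tendsto_zero.2 ?_⟩
  have hzq' : Tendsto (fun k => ‖z (φ k) - q‖) atTop (𝓝 0) :=
    tendsto_iff_norm_sub_tendsto_zero.1 hzq
  have hbound : ∀ k, ‖T^[φ k] q - q‖
      ≤ 2 * ‖z (φ k) - q‖ + a (φ k) + ‖z (φ k) - T^[φ k] (z (φ k))‖ := fun k => by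
    have h := hTa (φ k) q hqC (z (φ k)) (hzC _)
    rw [norm_sub_rev q] at h
    have h₁ := norm_sub_le_norm_sub_add_norm_sub (T^[φ k] q) (T^[φ k] (z (φ k))) q
    have h₂ := norm_sub_le_norm_sub_add_norm_sub (T^[φ k] (z (φ k))) (z (φ k)) q
    rw [norm_sub_rev (T^[φ k] (z (φ k))) (z (φ k))] at h₂
    linarith
  refine squeeze_zero (fun k => norm_nonneg _) hbound ?_
  have hφ' := hφ.tendsto_atTop
  simpa using ((hzq'.const_mul 2).add (halim.comp hφ')).add (hz.comp hφ')

theorem NearlyNonexpansiveOn.exists_fixedPoint [StrictConvexSpace ℝ X]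
    (hTa : NearlyNonexpansiveOn T C a) (hne : C.Nonempty) (hcp : IsCompact C) (hcv : Convex ℝ C)
    (hT : MapsTo T C C) (hTc : ContinuousOn T C) (ha1 : ∀ n, a n ≤ 1)
    (halim : Tendsto a atTop (𝓝 0)) :
    ∃ p ∈ C, T p = p := by
  obtain ⟨q, hqC, φ, hφ, hq⟩ := hTa.exists_tendsto_iterate_self hne hcp hcv hT hTc ha1 halim
  set U := Ultrafilter.of (atTop : Filter ℕ)
  have hU : (U : Filter ℕ) ≤ atTop := Ultrafilter.of_le _
  have hφU : Tendsto φ U atTop := hφ.tendsto_atTop.mono_left hU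
  obtain ⟨S, hSC, hS⟩ := hcp.exists_mapsTo_forall_tendsto U (f := fun k => T^[φ k])
    fun k => hT.iterate _
  have hS1 : ∀ x ∈ C, ∀ y ∈ C, ‖S x - S y‖ ≤ ‖x - y‖ := fun x hx y hy =>
    norm_sub_le_of_tendsto_of_norm_sub_le_add (hS x hx) (hS y hy) (halim.comp hφU)
      fun k => hTa _ x hx y hy
  have hSq : S q = q := tendsto_nhds_unique (hS q hqC) (hq.mono_left hU)
  have hST : ∀ x ∈ C, S (T x) = T (S x) := fun x hx => by
    refine tendsto_nhds_unique (hS (T x) (hT hx)) ?_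
    simp_rw [← iterate_succ_apply, iterate_succ_apply']
    exact (hTc.continuousWithinAt (hSC hx)).tendsto.comp
      (tendsto_nhdsWithin_iff.2 ⟨hS x hx, univ_mem' fun k => hT.iterate _ hx⟩)
  set F := {x ∈ C | S x = x}
  have hFcl : IsClosed F := by
    have : F = C ∩ (fun x => S x - x) ⁻¹' {0} := by ext; simp [F, sub_eq_zero]
    rw [this]
    exact ((continuousOn_of_norm_sub_le_mul zero_le_one (by simpa using hS1)).sub
      continuousOn_id).preimage_isClosed_of_isClosed hcp.isClosed isClosed_singleton
  have hTF : MapsTo T F F := fun x ⟨hxC, hx⟩ => ⟨hT hxC, by rw [hST x hxC, hx]⟩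
  have hT1 : ∀ x ∈ F, ∀ y ∈ F, ‖T x - T y‖ ≤ ‖x - y‖ := fun x hx y hy => by
    have hx' := hS (T x) (hT hx.1)
    have hy' := hS (T y) (hT hy.1)
    rw [(hTF hx).2] at hx'
    rw [(hTF hy).2] at hy'
    exact norm_sub_le_of_tendsto_of_norm_sub_le_add hx' hy'
      (halim.comp ((tendsto_add_atTop_nat 1).comp hφU)) fun k => hTa (φ k + 1) x hx.1 y hy.1
  obtain ⟨p, hpF, hp⟩ := exists_fixedPoint_of_nonexpansiveOn (C := F) ⟨q, hqC, hSq⟩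
    (hcp.of_isClosed_subset hFcl (sep_subset _ _)) (hcv.fixedPoints_of_nonexpansiveOn hS1) hTF hT1
  exact ⟨p, hpF.1, hp⟩

lemma norm_combo_le_of_norm_add_le {u v : X} {r δ t : ℝ} (hu : ‖u‖ ≤ r) (hv : ‖v‖ ≤ r)
    (huv : ‖u + v‖ ≤ 2 * r - δ) (ht0 : 0 ≤ t) (ht1 : t ≤ 1) :
    ‖(1 - t) • u + t • v‖ ≤ r - min t (1 - t) * δ := by
  wlog ht : t ≤ 1 / 2 generalizing u v t
  · have := @this v u (1 - t) hv hu (by rwa [add_comm]) (by linarith) (by linarith) (by linarith)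
    rwa [sub_sub_cancel, min_comm, add_comm] at this
  -- `(1 - t) • u + t • v` is a convex combination of `u` and the midpoint of `u` and `v`
  have heq : (1 - t) • u + t • v = (1 - 2 * t) • u + t • (u + v) := by module
  calc ‖(1 - t) • u + t • v‖ ≤ (1 - 2 * t) * ‖u‖ + t * ‖u + v‖ := by
        rw [heq]
        refine (norm_add_le _ _).trans_eq ?_
        rw [norm_smul, norm_smul, Real.norm_of_nonneg (by linarith), Real.norm_of_nonneg ht0]
    _ ≤ (1 - 2 * t) * r + t * (2 * r - δ) := by gcongr; linarith
    _ = r - min t (1 - t) * δ := by rw [min_eq_left (by linarith)]; ring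

lemma exists_norm_combo_le_mul [UniformConvexSpace X] {ε a' b' : ℝ} (hε : 0 < ε)
    (ha' : 0 < a') (hb' : b' < 1) :
    ∃ δ > 0, ∀ ⦃r : ℝ⦄ ⦃u v : X⦄ ⦃t : ℝ⦄, ‖u‖ ≤ r → ‖v‖ ≤ r → ε * r ≤ ‖u - v‖ →
      t ∈ Icc a' b' → ‖(1 - t) • u + t • v‖ ≤ (1 - δ) * r := by
  obtain ⟨δ, hδ, hδuv⟩ := exists_forall_closed_ball_dist_add_le_two_sub X hε
  refine ⟨min a' (1 - b') * δ, by have := sub_pos.2 hb'; positivity, ?_⟩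
  intro r u v t hu hv huv ⟨hta, htb⟩
  obtain hr | hr := (norm_nonneg u).trans hu |>.eq_or_lt
  · obtain rfl : u = 0 := norm_le_zero_iff.1 (hr ▸ hu)
    obtain rfl : v = 0 := norm_le_zero_iff.1 (hr ▸ hv)
    simp [← hr]
  -- rescale to the unit ball
  have hsum : ‖u + v‖ ≤ 2 * r - r * δ := by
    have hr' : ‖r⁻¹‖ = r⁻¹ := Real.norm_of_nonneg (inv_nonneg.2 hr.le)
    have key := @hδuv (r⁻¹ • u) (by rw [norm_smul, hr']; exact inv_mul_le_one_of_le₀ hu hr.le)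
      (r⁻¹ • v) (by rw [norm_smul, hr']; exact inv_mul_le_one_of_le₀ hv hr.le)
      (by rw [← smul_sub, norm_smul, hr', le_inv_mul_iff₀ hr]; linarith)
    rw [← smul_add, norm_smul, hr', inv_mul_le_iff₀ hr] at key
    linarith
  have hmin : min a' (1 - b') ≤ min t (1 - t) := min_le_min hta (by linarith)
  calc ‖(1 - t) • u + t • v‖ ≤ r - min t (1 - t) * (r * δ) :=
        norm_combo_le_of_norm_add_le hu hv hsum (by linarith) (by linarith)
    _ ≤ (1 - min a' (1 - b') * δ) * r := by nlinarith [mul_pos hr hδ]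

lemma tendsto_sub_of_tendsto_norm_combo [UniformConvexSpace X] {u v : ℕ → X} {α : ℕ → ℝ}
    {a' b' c : ℝ} (ha' : 0 < a') (hb' : b' < 1) (hα : ∀ n, α n ∈ Icc a' b') {cu cv : ℕ → ℝ}
    (hu : ∀ n, ‖u n‖ ≤ cu n) (hv : ∀ n, ‖v n‖ ≤ cv n) (hcu : Tendsto cu atTop (𝓝 c))
    (hcv : Tendsto cv atTop (𝓝 c))
    (hw : Tendsto (fun n => ‖(1 - α n) • u n + α n • v n‖) atTop (𝓝 c)) :
    Tendsto (fun n => u n - v n) atTop (𝓝 0) := by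
  set R : ℕ → ℝ := fun n => max (cu n) (cv n)
  have hR : Tendsto R atTop (𝓝 c) := by simpa using hcu.max hcv
  have huR : ∀ n, ‖u n‖ ≤ R n := fun n => (hu n).trans (le_max_left _ _)
  have hvR : ∀ n, ‖v n‖ ≤ R n := fun n => (hv n).trans (le_max_right _ _)
  obtain hc | hc := (ge_of_tendsto' hw fun n => norm_nonneg _).eq_or_lt
  · refine squeeze_zero_norm (fun n => (norm_sub_le _ _).trans (add_le_add (huR n) (hvR n))) ?_
    simpa [← hc] using hR.add hR
  rw [NormedAddGroup.tendsto_nhds_zero]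
  intro ε hε
  obtain ⟨δ, hδ, hcombo⟩ := exists_norm_combo_le_mul (X := X) (div_pos hε (mul_pos two_pos hc))
    ha' hb'
  have hR2 : ∀ᶠ n in atTop, R n < 2 * c := hR.eventually (gt_mem_nhds (by linarith))
  have hRw : ∀ᶠ n in atTop, (1 - δ) * R n < ‖(1 - α n) • u n + α n • v n‖ :=
    (hR.const_mul _).eventually_lt hw (by nlinarith)
  filter_upwards [hR2, hRw] with n hR2 hRw
  by_contra! h
  have hεR : ε / (2 * c) * R n ≤ ‖u n - v n‖ := by
    rw [div_mul_eq_mul_div, div_le_iff₀ (by positivity)]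
    nlinarith
  linarith [hcombo (huR n) (hvR n) hεR (hα n)]

variable {α : ℕ → ℝ} {x y : ℕ → X}

lemma NearlyNonexpansiveOn.norm_picardMann_sub_le (hTa : NearlyNonexpansiveOn T C a)
    (hα : ∀ n, α n ∈ Icc 0 1) (hxC : ∀ n, x n ∈ C) (hyC : ∀ n, y n ∈ C)
    (hy : ∀ n, y n = (1 - α n) • x n + α n • T^[n] (x n)) (hx : ∀ n, x (n + 1) = T^[n] (y n))
    {p : X} (hpC : p ∈ C) (hp : T p = p) (n : ℕ) :
    ‖y n - p‖ ≤ ‖x n - p‖ + a n ∧ ‖x (n + 1) - p‖ ≤ ‖y n - p‖ + a n := by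
  have hTp : ∀ z ∈ C, ‖T^[n] z - p‖ ≤ ‖z - p‖ + a n := fun z hz => by
    simpa [iterate_fixed hp] using hTa n z hz p hpC
  obtain ⟨hα0, hα1⟩ := hα n
  refine ⟨?_, hx n ▸ hTp _ (hyC n)⟩
  calc ‖y n - p‖ = ‖(1 - α n) • (x n - p) + α n • (T^[n] (x n) - p)‖ := by
        rw [hy n]; congr 1; module
    _ ≤ (1 - α n) * ‖x n - p‖ + α n * ‖T^[n] (x n) - p‖ := by
        refine (norm_add_le _ _).trans_eq ?_
        rw [norm_smul, norm_smul, Real.norm_of_nonneg (by linarith), Real.norm_of_nonneg hα0]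
    _ ≤ (1 - α n) * ‖x n - p‖ + α n * (‖x n - p‖ + a n) := by
        gcongr; exact hTp _ (hxC n)
    _ ≤ ‖x n - p‖ + a n := by nlinarith [hTa.nonneg hpC n]

lemma NearlyNonexpansiveOn.exists_tendsto_norm_picardMann_sub (hTa : NearlyNonexpansiveOn T C a)
    (hasum : Summable a) (hα : ∀ n, α n ∈ Icc 0 1) (hxC : ∀ n, x n ∈ C) (hyC : ∀ n, y n ∈ C)
    (hy : ∀ n, y n = (1 - α n) • x n + α n • T^[n] (x n)) (hx : ∀ n, x (n + 1) = T^[n] (y n))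
    {p : X} (hpC : p ∈ C) (hp : T p = p) : ∃ ℓ, Tendsto (fun n => ‖x n - p‖) atTop (𝓝 ℓ) := by
  refine exists_tendsto_of_le_add_of_summable_s11 (b := fun n => 2 * a n) (fun n => norm_nonneg _)
    (fun n => mul_nonneg zero_le_two (hTa.nonneg hpC n)) (hasum.mul_left 2) fun n => ?_
  have := hTa.norm_picardMann_sub_le hα hxC hyC hy hx hpC hp n
  linarith

lemma NearlyNonexpansiveOn.norm_picardMann_succ_sub_le (hTa : NearlyNonexpansiveOn T C a)
    (hα : ∀ n, α n ∈ Icc 0 1) (hxC : ∀ n, x n ∈ C) (hyC : ∀ n, y n ∈ C)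
    (hy : ∀ n, y n = (1 - α n) • x n + α n • T^[n] (x n)) (hx : ∀ n, x (n + 1) = T^[n] (y n))
    (n : ℕ) : ‖x (n + 1) - x n‖ ≤ 2 * ‖x n - T^[n] (x n)‖ + a n := by
  have hyx : ‖y n - x n‖ ≤ ‖x n - T^[n] (x n)‖ := by
    rw [hy n, show (1 - α n) • x n + α n • T^[n] (x n) - x n = α n • (T^[n] (x n) - x n) by
      module, norm_smul, Real.norm_of_nonneg (hα n).1, norm_sub_rev]
    exact mul_le_of_le_one_left (norm_nonneg _) (hα n).2
  have h₁ := hTa n (y n) (hyC n) (x n) (hxC n)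
  have h₂ := norm_sub_le_norm_sub_add_norm_sub (x (n + 1)) (T^[n] (x n)) (x n)
  rw [hx n, norm_sub_rev (T^[n] (x n))] at *
  linarith

lemma NearlyNonexpansiveOn.tendsto_norm_picardMann_sub_iterate [UniformConvexSpace X]
    (hTa : NearlyNonexpansiveOn T C a) (halim : Tendsto a atTop (𝓝 0)) (hasum : Summable a)
    {a' b' : ℝ} (ha' : 0 < a') (hb' : b' < 1) (hα : ∀ n, α n ∈ Icc a' b') (hxC : ∀ n, x n ∈ C)
    (hyC : ∀ n, y n ∈ C) (hy : ∀ n, y n = (1 - α n) • x n + α n • T^[n] (x n))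
    (hx : ∀ n, x (n + 1) = T^[n] (y n)) {p : X} (hpC : p ∈ C) (hp : T p = p) :
    Tendsto (fun n => ‖x n - T^[n] (x n)‖) atTop (𝓝 0) := by
  have hα01 : ∀ n, α n ∈ Icc 0 1 := fun n => Icc_subset_Icc ha'.le hb'.le (hα n)
  obtain ⟨ℓ, hℓ⟩ := hTa.exists_tendsto_norm_picardMann_sub hasum hα01 hxC hyC hy hx hpC hp
  have hstep := hTa.norm_picardMann_sub_le hα01 hxC hyC hy hx hpC hp
  have hyℓ : Tendsto (fun n => ‖y n - p‖) atTop (𝓝 ℓ) :=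
    tendsto_of_tendsto_of_tendsto_of_le_of_le
      (by simpa using (hℓ.comp (tendsto_add_atTop_nat 1)).sub halim) (by simpa using hℓ.add halim)
      (fun n => by linarith [(hstep n).2]) fun n => (hstep n).1
  -- Schu's lemma for `x n - p` and `T^[n] (x n) - p`, whose combination is `y n - p`
  have := tendsto_sub_of_tendsto_norm_combo ha' hb' hα (u := fun n => x n - p)
    (v := fun n => T^[n] (x n) - p) (fun n => le_rfl)
    (fun n => by simpa [iterate_fixed hp] using hTa n _ (hxC n) p hpC) hℓ
    (by simpa using hℓ.add halim) (by convert hyℓ using 3 with n; rw [hy n]; module)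
  simpa using this.norm

end NearlyNonexpansive

section UniformlyLipschitz

variable {X : Type*} [NormedAddCommGroup X] {C : Set X} {T : X → X}

lemma tendsto_norm_sub_apply_of_tendsto_norm_sub_iterate {L : ℝ} (hL : 0 ≤ L) (hT : MapsTo T C C)
    (hTL : ∀ x ∈ C, ∀ y ∈ C, ∀ n, 1 ≤ n → ‖T^[n] x - T^[n] y‖ ≤ L * ‖x - y‖) {x : ℕ → X}
    (hxC : ∀ n, x n ∈ C) (hσ : Tendsto (fun n => ‖x n - T^[n] (x n)‖) atTop (𝓝 0))
    (hΔ : Tendsto (fun n => ‖x (n + 1) - x n‖) atTop (𝓝 0)) :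
    Tendsto (fun n => ‖x n - T (x n)‖) atTop (𝓝 0) := by
  have hbound : ∀ n, 1 ≤ n → ‖x (n + 1) - T (x (n + 1))‖ ≤ ‖x (n + 1) - T^[n + 1] (x (n + 1))‖
      + L * ((L + 1) * ‖x (n + 1) - x n‖ + ‖x n - T^[n] (x n)‖) := fun n hn => by
    set x' := x (n + 1)
    have h₁ : ‖T^[n + 1] x' - T x'‖ ≤ L * ‖T^[n] x' - x'‖ := by
      simpa [iterate_succ_apply'] using hTL _ (hT.iterate n (hxC _)) x' (hxC _) 1 le_rfl
    have h₂ : ‖T^[n] x' - x'‖ ≤ (L + 1) * ‖x' - x n‖ + ‖x n - T^[n] (x n)‖ := by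
      have := hTL x' (hxC _) (x n) (hxC n) n hn
      have := norm_sub_le_norm_sub_add_norm_sub (T^[n] x') (T^[n] (x n)) x'
      have := norm_sub_le_norm_sub_add_norm_sub (T^[n] (x n)) (x n) x'
      rw [norm_sub_rev (T^[n] (x n)) (x n), norm_sub_rev (x n) x'] at this
      linarith
    have h₃ := norm_sub_le_norm_sub_add_norm_sub x' (T^[n + 1] x') (T x')
    nlinarith [mul_le_mul_of_nonneg_left h₂ hL]
  rw [← tendsto_add_atTop_iff_nat 2]
  refine squeeze_zero (fun _ => norm_nonneg _) (fun n => hbound (n + 1) n.succ_pos) ?_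
  have hσ₁ := hσ.comp (tendsto_add_atTop_nat 1)
  simpa using (hσ.comp (tendsto_add_atTop_nat 2)).add
    ((((hΔ.comp (tendsto_add_atTop_nat 1)).const_mul (L + 1)).add hσ₁).const_mul L)

end UniformlyLipschitz

theorem stmt_11_general
    {X : Type*} [NormedAddCommGroup X] [NormedSpace ℝ X]
    [UniformConvexSpace X]
    (C : Set X) (hC : C.Nonempty) (hCcp : IsCompact C) (hCcv : Convex ℝ C)
    (T : X → X) (hT : Set.MapsTo T C C)
    (L : ℝ) (hL : 0 < L)
    (hTL : ∀ x ∈ C, ∀ y ∈ C, ∀ n, 1 ≤ n → ‖T^[n] x - T^[n] y‖ ≤ L * ‖x - y‖)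
    (a : ℕ → ℝ) (ha : ∀ n, a n ∈ Set.Ico (0 : ℝ) 1)
    (halim : Filter.Tendsto a Filter.atTop (nhds 0))
    (hasum : Summable a)
    (hTa : ∀ x ∈ C, ∀ y ∈ C, ∀ n, 1 ≤ n → ‖T^[n] x - T^[n] y‖ ≤ ‖x - y‖ + a n)
    (α : ℕ → ℝ) (a' b' : ℝ) (ha' : 0 < a') (hb' : b' < 1)
    (hα : ∀ n, a' ≤ α n ∧ α n ≤ b')
    (x y : ℕ → X)
    (hxC : ∀ n, x n ∈ C) (hyC : ∀ n, y n ∈ C)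
    (hy : ∀ n, y n = (1 - α n) • x n + α n • T^[n] (x n))
    (hx : ∀ n, x (n + 1) = T^[n] (y n)) :
    ∃ p ∈ C, T p = p ∧ Filter.Tendsto x Filter.atTop (nhds p) := by
  have hTa' : NearlyNonexpansiveOn T C a := .of_one_le (fun n => (ha n).1) hTa
  have hTc : ContinuousOn T C :=
    continuousOn_of_norm_sub_le_mul hL.le fun x hx y hy => by simpa using hTL x hx y hy 1 le_rfl
  have hα01 : ∀ n, α n ∈ Icc 0 1 := fun n => Icc_subset_Icc ha'.le hb'.le (hα n)
  obtain ⟨p, hpC, hp⟩ := hTa'.exists_fixedPoint hC hCcp hCcv hT hTc (fun n => (ha n).2.le) halim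
  have hσ := hTa'.tendsto_norm_picardMann_sub_iterate halim hasum ha' hb' hα hxC hyC hy hx hpC hp
  have hΔ : Tendsto (fun n => ‖x (n + 1) - x n‖) atTop (𝓝 0) :=
    squeeze_zero (fun _ => norm_nonneg _) (hTa'.norm_picardMann_succ_sub_le hα01 hxC hyC hy hx)
      (by simpa using (hσ.const_mul 2).add halim)
  have hTx := tendsto_norm_sub_apply_of_tendsto_norm_sub_iterate hL.le hT hTL hxC hσ hΔ
  obtain ⟨q, hqC, φ, hφ, hxq⟩ := hCcp.isSeqCompact hxC
  have hq : T q = q := by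
    have h := ((continuousOn_id.sub hTc).norm.continuousWithinAt hqC).tendsto.comp
      (tendsto_nhdsWithin_iff.2 ⟨hxq, univ_mem' fun k => hxC _⟩)
    exact (sub_eq_zero.1 (norm_eq_zero.1 (tendsto_nhds_unique h (hTx.comp hφ.tendsto_atTop)))).symm
  obtain ⟨ℓ, hℓ⟩ := hTa'.exists_tendsto_norm_picardMann_sub hasum hα01 hxC hyC hy hx hqC hq
  obtain rfl : ℓ = 0 :=
    tendsto_nhds_unique (hℓ.comp hφ.tendsto_atTop) (tendsto_iff_norm_sub_tendsto_zero.1 hxq)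
  exact ⟨q, hqC, hq, tendsto_iff_norm_sub_tendsto_zero.2 hℓ⟩

/-- Theorem 3.1 (iii): `{x n}` converges strongly to a fixed point of `T`. -/
theorem stmt_11
    {X : Type*} [NormedAddCommGroup X] [NormedSpace ℝ X]
    [CompleteSpace X] [UniformConvexSpace X]
    (C : Set X) (hC : C.Nonempty) (hCcp : IsCompact C) (hCcv : Convex ℝ C)
    (T : X → X) (hT : Set.MapsTo T C C)
    (L : ℝ) (hL : 0 < L)
    (hTL : ∀ x ∈ C, ∀ y ∈ C, ∀ n, 1 ≤ n → ‖T^[n] x - T^[n] y‖ ≤ L * ‖x - y‖)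
    (a : ℕ → ℝ) (ha : ∀ n, a n ∈ Set.Ico (0 : ℝ) 1)
    (halim : Filter.Tendsto a Filter.atTop (nhds 0))
    (hasum : Summable a)
    (hTa : ∀ x ∈ C, ∀ y ∈ C, ∀ n, 1 ≤ n → ‖T^[n] x - T^[n] y‖ ≤ ‖x - y‖ + a n)
    (α : ℕ → ℝ) (a' b' : ℝ) (ha' : 0 < a') (hb' : b' < 1)
    (hα : ∀ n, a' ≤ α n ∧ α n ≤ b')
    (x y : ℕ → X)
    (hx0 : x 0 ∈ C)
    (hxC : ∀ n, x n ∈ C) (hyC : ∀ n, y n ∈ C)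
    (hy : ∀ n, y n = (1 - α n) • x n + α n • T^[n] (x n))
    (hx : ∀ n, x (n + 1) = T^[n] (y n)) :
    ∃ p ∈ C, T p = p ∧ Filter.Tendsto x Filter.atTop (nhds p) :=
  stmt_11_general C hC hCcp hCcv T hT L hL hTL a ha halim hasum hTa α a' b' ha' hb' hα x y hxC hyC
    hy hx
end

section
/- Let C be a nonempty compact convex subset of a real uniformly convex Banach space X, let T : C → C be a uniformly L-Lipschitzian, nearly nonexpansive mapping with respect to {a_n} with Σ_{n=0}^∞ a_n < ∞, let {α_n} satisfy 0 < a ≤ α_n ≤ b < 1 for all n, and let {x_n} be the modified Picard–Mann hybrid iteration y_n = (1 − α_n)x_n + α_n T^n x_n, x_{n+1} = T^n y_n. For a fixed point p of T, if c = lim_{n→∞} ‖x_n − p‖ (which exists), then lim_{n→∞} ‖y_n − p‖ = c. -/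
/-- Relation (3.8): if `‖x n - p‖ → c` then `‖y n - p‖ → c`. -/
theorem stmt_12
    {X : Type*} [NormedAddCommGroup X] [NormedSpace ℝ X]
    [CompleteSpace X] [UniformConvexSpace X]
    (C : Set X) (hC : C.Nonempty) (hCcp : IsCompact C) (hCcv : Convex ℝ C)
    (T : X → X) (hT : Set.MapsTo T C C)
    (L : ℝ) (hL : 0 < L)
    (hTL : ∀ x ∈ C, ∀ y ∈ C, ∀ n, 1 ≤ n → ‖T^[n] x - T^[n] y‖ ≤ L * ‖x - y‖)
    (a : ℕ → ℝ) (ha : ∀ n, a n ∈ Set.Ico (0 : ℝ) 1)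
    (halim : Filter.Tendsto a Filter.atTop (nhds 0))
    (hasum : Summable a)
    (hTa : ∀ x ∈ C, ∀ y ∈ C, ∀ n, 1 ≤ n → ‖T^[n] x - T^[n] y‖ ≤ ‖x - y‖ + a n)
    (α : ℕ → ℝ) (a' b' : ℝ) (ha' : 0 < a') (hb' : b' < 1)
    (hα : ∀ n, a' ≤ α n ∧ α n ≤ b')
    (x y : ℕ → X)
    (hx0 : x 0 ∈ C)
    (hxC : ∀ n, x n ∈ C) (hyC : ∀ n, y n ∈ C)
    (hy : ∀ n, y n = (1 - α n) • x n + α n • T^[n] (x n))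
    (hx : ∀ n, x (n + 1) = T^[n] (y n))
    (p : X) (hp : p ∈ C) (hfix : T p = p)
    (c : ℝ) (hc : Filter.Tendsto (fun n => ‖x n - p‖) Filter.atTop (nhds c)) :
    Filter.Tendsto (fun n => ‖y n - p‖) Filter.atTop (nhds c) := by

  have hpfix : ∀ n : ℕ, T^[n] p = p := fun n => Function.iterate_fixed hfix n
  have hupper : ∀ n, 1 ≤ n → ‖y n - p‖ ≤ ‖x n - p‖ + a n := by
    intro n hn
    have h1 : ‖T^[n] (x n) - p‖ ≤ ‖x n - p‖ + a n := by
      have := hTa (x n) (hxC n) p hp n hn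
      rwa [hpfix n] at this
    have hdec : y n - p = (1 - α n) • (x n - p) + (α n) • (T^[n] (x n) - p) := by
      rw [hy n]; module
    have hα0 : 0 ≤ α n := le_trans ha'.le (hα n).1
    have hα1 : α n ≤ 1 := le_trans (hα n).2 hb'.le
    have han : 0 ≤ a n := (ha n).1
    calc ‖y n - p‖ = ‖(1 - α n) • (x n - p) + (α n) • (T^[n] (x n) - p)‖ := by rw [hdec]
      _ ≤ ‖(1 - α n) • (x n - p)‖ + ‖(α n) • (T^[n] (x n) - p)‖ := norm_add_le _ _
      _ = (1 - α n) * ‖x n - p‖ + α n * ‖T^[n] (x n) - p‖ := by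
          rw [norm_smul, norm_smul, Real.norm_of_nonneg (by linarith), Real.norm_of_nonneg hα0]
      _ ≤ (1 - α n) * ‖x n - p‖ + α n * (‖x n - p‖ + a n) := by nlinarith
      _ ≤ ‖x n - p‖ + a n := by nlinarith
  have hlower : ∀ n, 1 ≤ n → ‖x (n + 1) - p‖ - a n ≤ ‖y n - p‖ := by
    intro n hn
    have h1 : ‖T^[n] (y n) - p‖ ≤ ‖y n - p‖ + a n := by
      have := hTa (y n) (hyC n) p hp n hn
      rwa [hpfix n] at this
    rw [hx n]; linarith
  refine tendsto_of_tendsto_of_tendsto_of_le_of_le'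
    (g := fun n => ‖x (n + 1) - p‖ - a n) (h := fun n => ‖x n - p‖ + a n) ?_ ?_ ?_ ?_
  · have : Filter.Tendsto (fun n => ‖x (n + 1) - p‖) Filter.atTop (nhds c) :=
      hc.comp (Filter.tendsto_add_atTop_nat 1)
    simpa using this.sub halim
  · simpa using hc.add halim
  · exact Filter.eventually_atTop.2 ⟨1, hlower⟩
  · exact Filter.eventually_atTop.2 ⟨1, hupper⟩
end

section
/- Let C be a nonempty compact convex subset of a real uniformly convex Banach space X, let T : C → C be a uniformly L-Lipschitzian, nearly nonexpansive mapping with respect to {a_n} with Σ_{n=0}^∞ a_n < ∞, let {α_n} satisfy 0 < a ≤ α_n ≤ b < 1 for all n, and let {x_n} be the modified Picard–Mann hybrid iteration y_n = (1 − α_n)x_n + α_n T^n x_n, x_{n+1} = T^n y_n. If lim_{n→∞} d(x_n, F(T)) = 0, then {x_n} is a Cauchy sequence in C. -/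
open Filter

/-- If a sequence in `C` satisfies `s (k+1) = T (s k)` and converges to `u ∈ C`,
and `T` is Lipschitz on `C`, then `u` is a fixed point of `T`. -/
lemma fix_of_orbit_limit
    {X : Type*} [NormedAddCommGroup X]
    (C : Set X) (T : X → X) (L : ℝ)
    (hTL1 : ∀ x ∈ C, ∀ y ∈ C, ‖T x - T y‖ ≤ L * ‖x - y‖)
    (hL : 0 < L)
    (s : ℕ → X) (hs : ∀ k, s k ∈ C) (hrec : ∀ k, s (k + 1) = T (s k))
    (u : X) (hu : u ∈ C) (hlim : Filter.Tendsto s atTop (nhds u)) :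
    T u = u := by
  have h1 : Tendsto (fun k => s (k + 1)) atTop (nhds u) :=
    hlim.comp (tendsto_add_atTop_nat 1)
  have hnorm : Tendsto (fun k => ‖s k - u‖) atTop (nhds 0) :=
    tendsto_iff_norm_sub_tendsto_zero.mp hlim
  have h2 : Tendsto (fun k => s (k + 1)) atTop (nhds (T u)) := by
    rw [tendsto_iff_norm_sub_tendsto_zero]
    have hb : Tendsto (fun k => L * ‖s k - u‖) atTop (nhds 0) := by
      simpa using hnorm.const_mul L
    refine squeeze_zero (fun k => norm_nonneg _) (fun k => ?_) hb
    rw [hrec k]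
    exact hTL1 _ (hs k) _ hu
  exact (tendsto_nhds_unique h1 h2).symm

/-- Existence of a fixed point for a uniformly Lipschitz, nearly nonexpansive map
on a nonempty compact convex subset of a uniformly convex space. -/
lemma exists_fixed_point
    {X : Type*} [NormedAddCommGroup X] [NormedSpace ℝ X] [UniformConvexSpace X]
    (C : Set X) (hC : C.Nonempty) (hCcp : IsCompact C) (hCcv : Convex ℝ C)
    (T : X → X) (hT : Set.MapsTo T C C)
    (L : ℝ) (hL : 0 < L)
    (hTL : ∀ x ∈ C, ∀ y ∈ C, ∀ n, 1 ≤ n → ‖T^[n] x - T^[n] y‖ ≤ L * ‖x - y‖)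
    (a : ℕ → ℝ) (ha : ∀ n, 0 ≤ a n)
    (halim : Filter.Tendsto a Filter.atTop (nhds 0))
    (hTa : ∀ x ∈ C, ∀ y ∈ C, ∀ n, 1 ≤ n → ‖T^[n] x - T^[n] y‖ ≤ ‖x - y‖ + a n) :
    ∃ p ∈ C, T p = p := by
  obtain ⟨z, hz⟩ := hC
  have hTL1 : ∀ x ∈ C, ∀ y ∈ C, ‖T x - T y‖ ≤ L * ‖x - y‖ := by
    intro x hx y hy
    have := hTL x hx y hy 1 le_rfl
    simpa using this
  set w : ℕ → X := fun m => T^[m] z with hw_def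
  have hw : ∀ m, w m ∈ C := fun m => hT.iterate m hz
  obtain ⟨M, hM⟩ : ∃ M, ∀ c ∈ C, ‖c‖ ≤ M :=
    Bornology.IsBounded.exists_norm_le hCcp.isBounded
  set r : X → ℝ := fun x => Filter.limsup (fun m => ‖w m - x‖) atTop with hr_def
  have hbdd : ∀ x : X, IsBoundedUnder (· ≤ ·) atTop (fun m => ‖w m - x‖) := by
    intro x
    exact isBoundedUnder_of ⟨M + ‖x‖, fun m => by
      have := hM _ (hw m); calc ‖w m - x‖ ≤ ‖w m‖ + ‖x‖ := norm_sub_le _ _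
        _ ≤ M + ‖x‖ := by linarith⟩
  have hbelow : ∀ x : X, IsBoundedUnder (· ≥ ·) atTop (fun m => ‖w m - x‖) :=
    fun x => isBoundedUnder_of ⟨0, fun m => norm_nonneg _⟩
  have cob : ∀ x : X, IsCoboundedUnder (· ≤ ·) atTop (fun m => ‖w m - x‖) :=
    fun x => (hbelow x).isCoboundedUnder_le
  have hsub : ∀ x y : X, r x ≤ r y + ‖x - y‖ := by
    intro x y
    have h1 : Filter.limsup (fun m => ‖w m - x‖) atTop ≤
        Filter.limsup (fun m => ‖w m - y‖ + ‖x - y‖) atTop := by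
      refine limsup_le_limsup (Eventually.of_forall fun m => ?_) (cob x) ?_
      · calc ‖w m - x‖ = ‖(w m - y) + (y - x)‖ := by rw [sub_add_sub_cancel]
          _ ≤ ‖w m - y‖ + ‖y - x‖ := norm_add_le _ _
          _ = ‖w m - y‖ + ‖x - y‖ := by rw [norm_sub_rev y x]
      · obtain ⟨B, hB⟩ := hbdd y
        exact isBoundedUnder_of ⟨M + ‖y‖ + ‖x - y‖, fun m => by
          have := hM _ (hw m)
          have h2 : ‖w m - y‖ ≤ M + ‖y‖ := by
            calc ‖w m - y‖ ≤ ‖w m‖ + ‖y‖ := norm_sub_le _ _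
              _ ≤ M + ‖y‖ := by linarith
          linarith⟩
    rwa [limsup_add_const atTop (fun m => ‖w m - y‖) (‖x - y‖) (hbdd y) (cob y)] at h1
  have hlip : LipschitzWith 1 r := by
    refine LipschitzWith.of_dist_le_mul fun x y => ?_
    rw [Real.dist_eq, dist_eq_norm, NNReal.coe_one, one_mul]
    rw [abs_sub_le_iff]
    constructor
    · linarith [hsub x y]
    · have := hsub y x
      rw [norm_sub_rev] at this
      linarith
  obtain ⟨u, huC, humin⟩ := hCcp.exists_isMinOn ⟨z, hz⟩ hlip.continuous.continuousOn
  have hrnonneg : 0 ≤ r u :=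
    le_limsup_of_frequently_le (Eventually.of_forall fun m => norm_nonneg _).frequently (hbdd u)
  have hkey : ∀ k, 1 ≤ k → r (T^[k] u) ≤ r u + a k := by
    intro k hk
    have hshift : r (T^[k] u) =
        Filter.limsup (fun m => ‖w (m + k) - T^[k] u‖) atTop :=
      (limsup_nat_add (fun m => ‖w m - T^[k] u‖) k).symm
    rw [hshift]
    have hpt : ∀ m, ‖w (m + k) - T^[k] u‖ ≤ ‖w m - u‖ + a k := by
      intro m
      have hwe : w (m + k) = T^[k] (w m) := by
        simp only [hw_def]
        rw [add_comm, Function.iterate_add_apply]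
      rw [hwe]
      exact hTa _ (hw m) _ huC k hk
    have h2 : Filter.limsup (fun m => ‖w (m + k) - T^[k] u‖) atTop ≤
        Filter.limsup (fun m => ‖w m - u‖ + a k) atTop := by
      refine limsup_le_limsup (Eventually.of_forall hpt)
        ((isBoundedUnder_of ⟨0, fun m => norm_nonneg _⟩ :
          IsBoundedUnder (· ≥ ·) atTop _).isCoboundedUnder_le) ?_
      obtain ⟨B, _⟩ := hbdd u
      exact isBoundedUnder_of ⟨M + ‖u‖ + a k, fun m => by
        have := hM _ (hw m)
        have h3 : ‖w m - u‖ ≤ M + ‖u‖ := by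
          calc ‖w m - u‖ ≤ ‖w m‖ + ‖u‖ := norm_sub_le _ _
            _ ≤ M + ‖u‖ := by linarith
        linarith⟩
    rwa [limsup_add_const atTop (fun m => ‖w m - u‖) (a k) (hbdd u) (cob u)] at h2
  rcases le_or_gt (r u) 0 with hru | hrs
  · -- r u = 0 : the orbit converges to u
    have hlimsup : Filter.limsup (fun m => ‖w m - u‖) atTop = 0 :=
      le_antisymm hru hrnonneg
    have hliminf : Filter.liminf (fun m => ‖w m - u‖) atTop = 0 := by
      refine le_antisymm ?_ ?_
      · calc Filter.liminf (fun m => ‖w m - u‖) atTop ≤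
            Filter.limsup (fun m => ‖w m - u‖) atTop :=
              liminf_le_limsup (hbdd u) (hbelow u)
          _ = 0 := hlimsup
      · exact le_liminf_of_le ((hbdd u).isCoboundedUnder_ge)
          (Eventually.of_forall fun m => norm_nonneg _)
    have hzero : Tendsto (fun m => ‖w m - u‖) atTop (nhds 0) :=
      tendsto_of_liminf_eq_limsup hliminf hlimsup (hbdd u) (hbelow u)
    have hwu : Tendsto w atTop (nhds u) := tendsto_iff_norm_sub_tendsto_zero.mpr hzero
    refine ⟨u, huC, fix_of_orbit_limit C T L hTL1 hL w hw (fun k => ?_) u huC hwu⟩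
    simp only [hw_def]
    rw [Function.iterate_succ_apply']
  · -- r u > 0 : asymptotic-center argument
    set rs := r u with hrs_def
    have hconv : Tendsto (fun k => T^[k] u) atTop (nhds u) := by
      rw [Metric.tendsto_atTop]
      intro δ hδ
      have hrs1 : (0:ℝ) < rs + 1 := by linarith
      have hε₀ : 0 < δ / (rs + 1) := div_pos hδ hrs1
      obtain ⟨δ₁, hδ₁, huc⟩ := exists_forall_closed_ball_dist_add_le_two_sub X hε₀
      set ε'' := min (rs * δ₁ / 4) 1 with hε''_def
      have hε''pos : 0 < ε'' := lt_min (by positivity) one_pos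
      have hε''le : ε'' ≤ rs * δ₁ / 4 := min_le_left _ _
      have hε''le1 : ε'' ≤ 1 := min_le_right _ _
      set R' := rs + ε'' with hR'_def
      have hR'pos : 0 < R' := by positivity
      have hR'le : R' ≤ rs + 1 := by simp only [hR'_def]; linarith
      have hak : ∀ᶠ k in atTop, a k < ε'' / 2 :=
        halim.eventually_lt_const (by positivity)
      obtain ⟨K, hK⟩ := (hak.and (eventually_ge_atTop 1)).exists_forall_of_atTop
      refine ⟨K, fun k hk => ?_⟩
      obtain ⟨hak', hk1⟩ := hK k hk
      by_contra hcon
      push_neg at hcon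
      set v := T^[k] u with hv_def
      have hvC : v ∈ C := hT.iterate k huC
      have hvu : δ ≤ ‖v - u‖ := by
        rw [← dist_eq_norm]; exact hcon
      have hrv : r v < R' := by
        have := hkey k hk1
        simp only [hR'_def]
        calc r v ≤ rs + a k := this
          _ < rs + ε'' := by linarith
      have hru' : r u < R' := by simp only [hR'_def, ← hrs_def]; linarith
      have hm1 : ∀ᶠ m in atTop, ‖w m - u‖ < R' :=
        eventually_lt_of_limsup_lt hru' (hbdd u)
      have hm2 : ∀ᶠ m in atTop, ‖w m - v‖ < R' :=
        eventually_lt_of_limsup_lt hrv (hbdd v)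
      set mid := (1/2 : ℝ) • u + (1/2 : ℝ) • v with hmid_def
      have hmidC : mid ∈ C := hCcv huC hvC (by norm_num) (by norm_num) (by norm_num)
      have hmb : ∀ᶠ m in atTop, ‖w m - mid‖ ≤ R' - δ₁ * rs / 2 := by
        filter_upwards [hm1, hm2] with m h1 h2
        have hx1 : ‖R'⁻¹ • (w m - u)‖ ≤ 1 := by
          rw [norm_smul, Real.norm_eq_abs, abs_of_pos (inv_pos.2 hR'pos)]
          rw [inv_mul_le_one₀ hR'pos]
          exact h1.le
        have hx2 : ‖R'⁻¹ • (w m - v)‖ ≤ 1 := by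
          rw [norm_smul, Real.norm_eq_abs, abs_of_pos (inv_pos.2 hR'pos)]
          rw [inv_mul_le_one₀ hR'pos]
          exact h2.le
        have hdiff : δ / (rs + 1) ≤ ‖R'⁻¹ • (w m - u) - R'⁻¹ • (w m - v)‖ := by
          rw [← smul_sub, norm_smul, Real.norm_eq_abs, abs_of_pos (inv_pos.2 hR'pos)]
          have heq : (w m - u) - (w m - v) = v - u := by abel
          rw [heq]
          calc δ / (rs + 1) ≤ δ / R' := by gcongr
              _ ≤ ‖v - u‖ / R' := by gcongr
              _ = R'⁻¹ * ‖v - u‖ := by rw [div_eq_inv_mul]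
        have hsum := huc hx1 hx2 hdiff
        rw [← smul_add, norm_smul, Real.norm_eq_abs, abs_of_pos (inv_pos.2 hR'pos)] at hsum
        have hsum2 : ‖(w m - u) + (w m - v)‖ ≤ (2 - δ₁) * R' := by
          rw [inv_mul_le_iff₀ hR'pos] at hsum
          linarith [hsum]
        have hmideq : w m - mid = (1/2 : ℝ) • ((w m - u) + (w m - v)) := by
          simp only [hmid_def]
          module
        rw [hmideq, norm_smul, Real.norm_eq_abs]
        have : |(1/2 : ℝ)| = 1/2 := by norm_num
        rw [this]
        have hrsR : rs ≤ R' := by simp only [hR'_def]; linarith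
        nlinarith [norm_nonneg ((w m - u) + (w m - v)), hδ₁]
      have hmin : rs ≤ r mid := humin hmidC
      have hmlt : r mid ≤ R' - δ₁ * rs / 2 := limsup_le_of_le (cob mid) hmb
      have : R' - δ₁ * rs / 2 < rs := by
        simp only [hR'_def]
        nlinarith
      linarith
    refine ⟨u, huC, fix_of_orbit_limit C T L hTL1 hL (fun k => T^[k] u)
      (fun k => hT.iterate k huC) (fun k => Function.iterate_succ_apply' T k u) u huC hconv⟩

/-- Part of the proof of Theorem 3.2: if `d(x n, F(T)) → 0` then `{x n}` is Cauchy. -/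
theorem stmt_14
    {X : Type*} [NormedAddCommGroup X] [NormedSpace ℝ X]
    [CompleteSpace X] [UniformConvexSpace X]
    (C : Set X) (hC : C.Nonempty) (hCcp : IsCompact C) (hCcv : Convex ℝ C)
    (T : X → X) (hT : Set.MapsTo T C C)
    (L : ℝ) (hL : 0 < L)
    (hTL : ∀ x ∈ C, ∀ y ∈ C, ∀ n, 1 ≤ n → ‖T^[n] x - T^[n] y‖ ≤ L * ‖x - y‖)
    (a : ℕ → ℝ) (ha : ∀ n, a n ∈ Set.Ico (0 : ℝ) 1)
    (halim : Filter.Tendsto a Filter.atTop (nhds 0))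
    (hasum : Summable a)
    (hTa : ∀ x ∈ C, ∀ y ∈ C, ∀ n, 1 ≤ n → ‖T^[n] x - T^[n] y‖ ≤ ‖x - y‖ + a n)
    (α : ℕ → ℝ) (a' b' : ℝ) (ha' : 0 < a') (hb' : b' < 1)
    (hα : ∀ n, a' ≤ α n ∧ α n ≤ b')
    (x y : ℕ → X)
    (hx0 : x 0 ∈ C)
    (hxC : ∀ n, x n ∈ C) (hyC : ∀ n, y n ∈ C)
    (hy : ∀ n, y n = (1 - α n) • x n + α n • T^[n] (x n))
    (hx : ∀ n, x (n + 1) = T^[n] (y n))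
    (hd : Filter.Tendsto (fun n => Metric.infDist (x n) {p ∈ C | T p = p})
      Filter.atTop (nhds 0)) :
    CauchySeq x := by
  obtain ⟨p, hpC, hpfix⟩ := exists_fixed_point C hC hCcp hCcv T hT L hL hTL
    a (fun n => (ha n).1) halim hTa
  set F : Set X := {p ∈ C | T p = p} with hF_def
  have hFne : F.Nonempty := ⟨p, hpC, hpfix⟩
  -- key one-step estimate
  have key : ∀ q ∈ F, ∀ n, ‖x (n + 1) - q‖ ≤ ‖x n - q‖ + 2 * a n := by
    intro q hq n
    obtain ⟨hqC, hqfix⟩ := hq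
    have hqiter : ∀ m, T^[m] q = q := fun m => Function.iterate_fixed hqfix m
    match n with
    | 0 =>
      have hx1 : x 1 = x 0 := by
        rw [hx 0, hy 0]
        simp only [Function.iterate_zero, id_eq]
        rw [← add_smul]
        simp
      rw [hx1]
      have := (ha 0).1
      linarith
    | Nat.succ m =>
      set n := m + 1 with hn_def
      have hn1 : 1 ≤ n := Nat.le_add_left 1 m
      have hyn : ‖y n - q‖ ≤ ‖x n - q‖ + a n := by
        have hsplit : y n - q = (1 - α n) • (x n - q) + α n • (T^[n] (x n) - q) := by
          rw [hy n]; module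
        have hαn := hα n
        have h1 : 0 ≤ 1 - α n := by linarith
        have h2 : 0 ≤ α n := by linarith
        have hTx : ‖T^[n] (x n) - q‖ ≤ ‖x n - q‖ + a n := by
          calc ‖T^[n] (x n) - q‖ = ‖T^[n] (x n) - T^[n] q‖ := by rw [hqiter n]
            _ ≤ ‖x n - q‖ + a n := hTa _ (hxC n) _ hqC n hn1
        calc ‖y n - q‖ ≤ ‖(1 - α n) • (x n - q)‖ + ‖α n • (T^[n] (x n) - q)‖ := by
              rw [hsplit]; exact norm_add_le _ _
          _ = (1 - α n) * ‖x n - q‖ + α n * ‖T^[n] (x n) - q‖ := by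
              rw [norm_smul, norm_smul, Real.norm_eq_abs, Real.norm_eq_abs,
                abs_of_nonneg h1, abs_of_nonneg h2]
          _ ≤ (1 - α n) * ‖x n - q‖ + α n * (‖x n - q‖ + a n) := by
              have := mul_le_mul_of_nonneg_left hTx h2
              linarith
          _ = ‖x n - q‖ + α n * a n := by ring
          _ ≤ ‖x n - q‖ + a n := by
              have h3 := (ha n).1
              nlinarith
      calc ‖x (n + 1) - q‖ = ‖T^[n] (y n) - T^[n] q‖ := by rw [hx n, hqiter n]
        _ ≤ ‖y n - q‖ + a n := hTa _ (hyC n) _ hqC n hn1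
        _ ≤ ‖x n - q‖ + 2 * a n := by linarith
  -- summed estimate
  have keysum : ∀ q ∈ F, ∀ n m, n ≤ m →
      ‖x m - q‖ ≤ ‖x n - q‖ + 2 * (∑ k ∈ Finset.Ico n m, a k) := by
    intro q hq n m hnm
    induction m with
    | zero =>
      have : n = 0 := Nat.le_zero.mp hnm
      subst this; simp
    | succ m ih =>
      rcases Nat.lt_or_ge n (m + 1) with hlt | hge
      · have hnm' : n ≤ m := Nat.lt_succ_iff.mp hlt
        have h1 := ih hnm'
        have h2 := key q hq m
        have hsum : ∑ k ∈ Finset.Ico n (m + 1), a k =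
            (∑ k ∈ Finset.Ico n m, a k) + a m := by
          rw [Finset.sum_Ico_succ_top hnm']
        rw [hsum]
        linarith
      · have : n = m + 1 := le_antisymm hnm hge
        subst this; simp
  -- partial sums are Cauchy
  have hS : CauchySeq (fun n => ∑ k ∈ Finset.range n, a k) :=
    hasum.hasSum.tendsto_sum_nat.cauchySeq
  rw [Metric.cauchySeq_iff'] at hS ⊢
  intro ε hε
  obtain ⟨N₂, hN₂⟩ := hS (ε / 16) (by linarith)
  obtain ⟨N₁, hN₁⟩ := (Metric.tendsto_atTop.mp hd) (ε / 8) (by linarith)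
  set N := max N₁ N₂ with hN_def
  have hdN : Metric.infDist (x N) F < ε / 8 := by
    have := hN₁ N (le_max_left _ _)
    rw [Real.dist_eq, sub_zero] at this
    calc Metric.infDist (x N) F ≤ |Metric.infDist (x N) F| := le_abs_self _
      _ < ε / 8 := this
  obtain ⟨q, hqF, hq⟩ := (Metric.infDist_lt_iff hFne).mp hdN
  rw [dist_eq_norm] at hq
  have htail : ∀ m, N ≤ m → ∑ k ∈ Finset.Ico N m, a k < ε / 8 := by
    intro m hm
    have h1 := hN₂ m (le_trans (le_max_right _ _) hm)
    have h2 := hN₂ N (le_max_right _ _)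
    rw [Real.dist_eq] at h1 h2
    have hsum : ∑ k ∈ Finset.Ico N m, a k =
        (∑ k ∈ Finset.range m, a k) - ∑ k ∈ Finset.range N, a k := by
      rw [Finset.sum_Ico_eq_sub _ hm]
    have h1' := abs_lt.mp h1
    have h2' := abs_lt.mp h2
    rw [hsum]
    linarith [h1'.1, h1'.2, h2'.1, h2'.2]
  refine ⟨N, fun n hn => ?_⟩
  have hb : ∀ m, N ≤ m → ‖x m - q‖ < ε / 8 + ε / 4 := by
    intro m hm
    have := keysum q hqF N m hm
    have ht := htail m hm
    linarith
  rw [dist_eq_norm]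
  calc ‖x n - x N‖ = ‖(x n - q) - (x N - q)‖ := by rw [sub_sub_sub_cancel_right]
    _ ≤ ‖x n - q‖ + ‖x N - q‖ := norm_sub_le _ _
    _ < (ε / 8 + ε / 4) + (ε / 8 + ε / 4) := add_lt_add (hb n hn) (hb N le_rfl)
    _ < ε := by linarith
end

section
/- Let C be a nonempty compact convex subset of a real uniformly convex Banach space X, let T : C → C be a uniformly L-Lipschitzian, nearly nonexpansive mapping with respect to {a_n} with Σ_{n=0}^∞ a_n < ∞, let {α_n} satisfy 0 < a ≤ α_n ≤ b < 1 for all n, and let {x_n} be the modified Picard–Mann hybrid iteration y_n = (1 − α_n)x_n + α_n T^n x_n, x_{n+1} = T^n y_n. If T satisfies Condition (I), i.e., there exists a non-decreasing function φ : [0,∞) → [0,∞) with φ(0) = 0 and φ(t) > 0 for all t > 0 such that ‖x − Tx‖ ≥ φ(d(x, F(T))) for all x ∈ C, then {x_n} converges strongly to a fixed point of T. -/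
open Filter Metric Set

/-- Scaled uniform convexity: uniform over radii `R ≤ M`. -/
lemma uc_key {X : Type*} [NormedAddCommGroup X] [NormedSpace ℝ X] [UniformConvexSpace X]
    {ε M : ℝ} (hε : 0 < ε) (hM : 0 < M) :
    ∃ δ > 0, ∀ R : ℝ, R ≤ M → ∀ u v : X, ‖u‖ ≤ R → ‖v‖ ≤ R → ε ≤ ‖u - v‖ →
      ‖u + v‖ ≤ 2 * R - δ := by
  obtain ⟨δ0, hδ0, h⟩ := exists_forall_closed_ball_dist_add_le_two_sub X (div_pos hε hM)
  refine ⟨ε / 2 * δ0, by positivity, fun R hRM u v hu hv huv => ?_⟩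
  have hR : ε / 2 ≤ R := by
    have h1 := huv.trans (norm_sub_le u v)
    linarith
  have hRpos : (0:ℝ) < R := lt_of_lt_of_le (by positivity) hR
  have h1 : ‖R⁻¹ • u‖ ≤ 1 := by
    rw [norm_smul, norm_inv, Real.norm_of_nonneg hRpos.le, inv_mul_le_one₀ hRpos]
    simpa using hu
  have h2 : ‖R⁻¹ • v‖ ≤ 1 := by
    rw [norm_smul, norm_inv, Real.norm_of_nonneg hRpos.le, inv_mul_le_one₀ hRpos]
    simpa using hv
  have h3 : ε / M ≤ ‖R⁻¹ • u - R⁻¹ • v‖ := by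
    rw [← smul_sub, norm_smul, norm_inv, Real.norm_of_nonneg hRpos.le]
    rw [div_le_iff₀ hM]
    calc ε ≤ ‖u - v‖ := huv
    _ = (R⁻¹ * ‖u - v‖) * R := by field_simp
    _ ≤ (R⁻¹ * ‖u - v‖) * M := by
        have : 0 ≤ R⁻¹ * ‖u - v‖ := by positivity
        exact mul_le_mul_of_nonneg_left hRM this
  have h4 := h h1 h2 h3
  rw [← smul_add, norm_smul, norm_inv, Real.norm_of_nonneg hRpos.le] at h4
  have h5 : ‖u + v‖ ≤ (2 - δ0) * R := by
    have := mul_le_mul_of_nonneg_right h4 hRpos.le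
    calc ‖u + v‖ = R⁻¹ * ‖u + v‖ * R := by field_simp
    _ ≤ (2 - δ0) * R := this
  calc ‖u + v‖ ≤ (2 - δ0) * R := h5
  _ = 2 * R - δ0 * R := by ring
  _ ≤ 2 * R - ε / 2 * δ0 := by nlinarith

lemma seq_converges {c b : ℕ → ℝ} (hc0 : ∀ n, 0 ≤ c n) (hb0 : ∀ n, 0 ≤ b n)
    (hb : Summable b) (hstep : ∀ n, c (n + 1) ≤ c n + b n) :
    ∃ l, 0 ≤ l ∧ Filter.Tendsto c Filter.atTop (nhds l) := by
  set s : ℕ → ℝ := fun n => ∑ k ∈ Finset.range n, b k with hs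
  have hsS : Tendsto s atTop (nhds (∑' k, b k)) := hb.hasSum.tendsto_sum_nat
  have hsle : ∀ n, s n ≤ ∑' k, b k := fun n => Summable.sum_le_tsum _ (fun k _ => hb0 k) hb
  set g : ℕ → ℝ := fun n => c n - s n with hg
  have hganti : Antitone g := antitone_nat_of_succ_le (fun n => by
    have := hstep n
    simp only [hg, hs, Finset.sum_range_succ]
    linarith)
  have hgbdd : BddBelow (Set.range g) := by
    refine ⟨-(∑' k, b k), fun z hz => ?_⟩
    obtain ⟨n, rfl⟩ := hz
    have := hsle n
    have := hc0 n
    simp only [hg]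
    linarith
  have hgl : Tendsto g atTop (nhds (⨅ n, g n)) := tendsto_atTop_ciInf hganti hgbdd
  refine ⟨(⨅ n, g n) + ∑' k, b k, ?_, ?_⟩
  · have h0 : Tendsto (fun n => g n + s n) atTop (nhds ((⨅ n, g n) + ∑' k, b k)) :=
      hgl.add hsS
    have heq : (fun n => g n + s n) = c := by funext n; simp [hg]
    rw [heq] at h0
    exact ge_of_tendsto' h0 (fun n => hc0 n)
  · have h0 : Tendsto (fun n => g n + s n) atTop (nhds ((⨅ n, g n) + ∑' k, b k)) :=
      hgl.add hsS
    have heq : (fun n => g n + s n) = c := by funext n; simp [hg]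
    rwa [heq] at h0

lemma exists_fixed {X : Type*} [NormedAddCommGroup X] [NormedSpace ℝ X] [UniformConvexSpace X]
    (C : Set X) (hC : C.Nonempty) (hCcp : IsCompact C) (hCcv : Convex ℝ C)
    (T : X → X) (hT : Set.MapsTo T C C)
    (L : ℝ) (hL : 0 < L)
    (hTL : ∀ x ∈ C, ∀ y ∈ C, ∀ n, 1 ≤ n → ‖T^[n] x - T^[n] y‖ ≤ L * ‖x - y‖)
    (a : ℕ → ℝ) (ha0 : ∀ n, 0 ≤ a n)
    (halim : Filter.Tendsto a Filter.atTop (nhds 0))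
    (hTa : ∀ x ∈ C, ∀ y ∈ C, ∀ n, 1 ≤ n → ‖T^[n] x - T^[n] y‖ ≤ ‖x - y‖ + a n)
    (huc : ∀ {ε M : ℝ}, 0 < ε → 0 < M →
      ∃ δ > 0, ∀ R : ℝ, R ≤ M → ∀ u v : X, ‖u‖ ≤ R → ‖v‖ ≤ R → ε ≤ ‖u - v‖ →
        ‖u + v‖ ≤ 2 * R - δ) :
    ∃ p ∈ C, T p = p := by
  obtain ⟨x0, hx0⟩ := hC
  set u : ℕ → X := fun n => T^[n] x0 with hu
  have huC : ∀ n, u n ∈ C := fun n => hT.iterate n hx0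
  obtain ⟨K, hK⟩ := hCcp.isBounded.exists_norm_le
  have bddf : ∀ z : X, IsBoundedUnder (· ≤ ·) atTop (fun n => ‖z - u n‖) := fun z =>
    isBoundedUnder_of ⟨‖z‖ + K, fun n => (norm_sub_le _ _).trans (by
      have := hK _ (huC n); linarith)⟩
  have bddg : ∀ z : X, IsBoundedUnder (· ≥ ·) atTop (fun n => ‖z - u n‖) := fun z =>
    isBoundedUnder_of ⟨0, fun n => norm_nonneg _⟩
  have cobddle : ∀ z : X, IsCoboundedUnder (· ≤ ·) atTop (fun n => ‖z - u n‖) := fun z =>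
    (bddg z).isCoboundedUnder_le
  set f : X → ℝ := fun z => limsup (fun n => ‖z - u n‖) atTop with hf
  have hfle : ∀ z w : X, f z ≤ f w + ‖z - w‖ := by
    intro z w
    have h1 : f z ≤ limsup (fun n => ‖w - u n‖ + ‖z - w‖) atTop := by
      refine limsup_le_limsup (Eventually.of_forall fun n => ?_) (cobddle z)
        (isBoundedUnder_of ⟨‖w‖ + K + ‖z - w‖, fun n => by
          have h2 := hK _ (huC n)
          have h3 := norm_sub_le w (u n)
          linarith⟩)
      calc ‖z - u n‖ = ‖(z - w) + (w - u n)‖ := by abel_nf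
      _ ≤ ‖z - w‖ + ‖w - u n‖ := norm_add_le _ _
      _ = ‖w - u n‖ + ‖z - w‖ := by ring
    rwa [limsup_add_const atTop _ _ (bddf w) (cobddle w)] at h1
  have hlip : LipschitzWith 1 f := by
    refine LipschitzWith.of_dist_le_mul fun z w => ?_
    rw [NNReal.coe_one, one_mul, Real.dist_eq, abs_sub_le_iff, dist_eq_norm]
    constructor
    · have := hfle z w; linarith
    · have := hfle w z; rw [norm_sub_rev] at this; linarith
  obtain ⟨c, hcC, hmin⟩ := hCcp.exists_isMinOn ⟨x0, hx0⟩ hlip.continuous.continuousOn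
  set r := f c with hr
  have hr0 : 0 ≤ r :=
    le_limsup_of_frequently_le (Frequently.of_forall fun n => norm_nonneg _) (bddf c)
  have hfTm : ∀ m, 1 ≤ m → f (T^[m] c) ≤ r + a m := by
    intro m hm
    refine le_of_forall_pos_le_add fun ε hε => ?_
    have h1 : ∀ᶠ n in atTop, ‖c - u n‖ < r + ε :=
      eventually_lt_of_limsup_lt (by change f c < _; linarith) (bddf c)
    obtain ⟨N, hN⟩ := eventually_atTop.1 h1
    have h2 : ∀ᶠ n in atTop, ‖T^[m] c - u n‖ ≤ r + ε + a m := by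
      refine eventually_atTop.2 ⟨N + m, fun n hn => ?_⟩
      have hnm : m + (n - m) = n := by omega
      have hui : u n = T^[m] (u (n - m)) := by
        show T^[n] x0 = _
        rw [hu]; dsimp only; rw [← Function.iterate_add_apply, hnm]
      rw [hui]
      have h3 := hTa c hcC (u (n - m)) (huC _) m hm
      have h4 := hN (n - m) (by omega)
      linarith
    have h5 : f (T^[m] c) ≤ r + ε + a m := limsup_le_of_le (cobddle _) h2
    linarith
  have hconv : ∀ d : ℝ, 0 < d → ∀ᶠ m in atTop, ‖T^[m] c - c‖ < d := by
    intro d hd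
    obtain ⟨δ, hδ, hkey⟩ := huc hd (show (0:ℝ) < r + 1 by linarith)
    set η := min (1/2 : ℝ) (δ/8) with hη
    have hη0 : 0 < η := lt_min (by norm_num) (by linarith)
    have hev1 : ∀ᶠ m in atTop, a m < η := halim.eventually_lt_const hη0
    filter_upwards [hev1, eventually_ge_atTop 1] with m ham hm1
    by_contra hcon
    push_neg at hcon
    set w := T^[m] c with hw
    have hwC : w ∈ C := hT.iterate m hcC
    set mid := (1/2 : ℝ) • c + (1/2 : ℝ) • w with hmid
    have hmidC : mid ∈ C := hCcv hcC hwC (by norm_num) (by norm_num) (by norm_num)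
    have hrmid : r ≤ f mid := hmin hmidC
    have hb1 : ∀ᶠ n in atTop, ‖c - u n‖ < r + η :=
      eventually_lt_of_limsup_lt (by change f c < _; linarith) (bddf c)
    have hb2 : ∀ᶠ n in atTop, ‖w - u n‖ < r + 2*η := by
      refine eventually_lt_of_limsup_lt ?_ (bddf w)
      have := hfTm m hm1
      change f w ≤ r + a m at this
      linarith
    have hb3 : ∀ᶠ n in atTop, ‖mid - u n‖ ≤ r + 2*η - δ/2 := by
      filter_upwards [hb1, hb2] with n h1 h2
      have hsub : d ≤ ‖(c - u n) - (w - u n)‖ := by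
        rw [sub_sub_sub_cancel_right, norm_sub_rev]
        exact hcon
      have hη1 : η ≤ 1/2 := min_le_left _ _
      have hkey' := hkey (r + 2*η) (by linarith) (c - u n) (w - u n)
        (by linarith) (by linarith) hsub
      have hmid' : mid - u n = (1/2 : ℝ) • ((c - u n) + (w - u n)) := by
        rw [hmid]; module
      rw [hmid', norm_smul]
      have : ‖(1/2 : ℝ)‖ = 1/2 := by norm_num
      rw [this]
      linarith
    have h6 : f mid ≤ r + 2*η - δ/2 := limsup_le_of_le (cobddle mid) hb3
    have h7 : η ≤ δ/8 := min_le_right _ _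
    linarith
  have hconv' : Tendsto (fun m => T^[m] c) atTop (nhds c) := by
    rw [tendsto_iff_norm_sub_tendsto_zero]
    refine tendsto_order.2 ⟨fun b hb => Eventually.of_forall fun m =>
      lt_of_lt_of_le hb (norm_nonneg _), fun b hb => hconv b hb⟩
  have hTcont : Tendsto (fun m => T (T^[m] c)) atTop (nhds (T c)) := by
    rw [tendsto_iff_norm_sub_tendsto_zero]
    have hb : ∀ m, ‖T (T^[m] c) - T c‖ ≤ L * ‖T^[m] c - c‖ := fun m => by
      have := hTL (T^[m] c) (hT.iterate m hcC) c hcC 1 le_rfl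
      simpa [Function.iterate_one] using this
    have h0 : Tendsto (fun m => L * ‖T^[m] c - c‖) atTop (nhds 0) := by
      have := (tendsto_iff_norm_sub_tendsto_zero.1 hconv').const_mul L
      simpa using this
    exact squeeze_zero (fun m => norm_nonneg _) hb h0
  have hshift : Tendsto (fun m => T^[m+1] c) atTop (nhds c) :=
    hconv'.comp (tendsto_add_atTop_nat 1)
  have heq : (fun m => T^[m+1] c) = fun m => T (T^[m] c) := by
    funext m; rw [Function.iterate_succ_apply']
  rw [heq] at hshift
  exact ⟨c, hcC, tendsto_nhds_unique hTcont hshift⟩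

set_option maxHeartbeats 1000000 in
/-- Theorem 3.3: if `T` satisfies Condition (I), then `{x n}` converges strongly to a fixed point of `T`. -/
theorem stmt_15
    {X : Type*} [NormedAddCommGroup X] [NormedSpace ℝ X]
    [CompleteSpace X] [UniformConvexSpace X]
    (C : Set X) (hC : C.Nonempty) (hCcp : IsCompact C) (hCcv : Convex ℝ C)
    (T : X → X) (hT : Set.MapsTo T C C)
    (L : ℝ) (hL : 0 < L)
    (hTL : ∀ x ∈ C, ∀ y ∈ C, ∀ n, 1 ≤ n → ‖T^[n] x - T^[n] y‖ ≤ L * ‖x - y‖)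
    (a : ℕ → ℝ) (ha : ∀ n, a n ∈ Set.Ico (0 : ℝ) 1)
    (halim : Filter.Tendsto a Filter.atTop (nhds 0))
    (hasum : Summable a)
    (hTa : ∀ x ∈ C, ∀ y ∈ C, ∀ n, 1 ≤ n → ‖T^[n] x - T^[n] y‖ ≤ ‖x - y‖ + a n)
    (α : ℕ → ℝ) (a' b' : ℝ) (ha' : 0 < a') (hb' : b' < 1)
    (hα : ∀ n, a' ≤ α n ∧ α n ≤ b')
    (x y : ℕ → X)
    (hx0 : x 0 ∈ C)
    (hxC : ∀ n, x n ∈ C) (hyC : ∀ n, y n ∈ C)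
    (hy : ∀ n, y n = (1 - α n) • x n + α n • T^[n] (x n))
    (hx : ∀ n, x (n + 1) = T^[n] (y n))
    (φ : ℝ → ℝ) (hφmono : ∀ s t : ℝ, 0 ≤ s → s ≤ t → φ s ≤ φ t)
    (hφ0 : φ 0 = 0) (hφpos : ∀ t : ℝ, 0 < t → 0 < φ t)
    (hφrange : ∀ t : ℝ, 0 ≤ t → 0 ≤ φ t)
    (hcond : ∀ z ∈ C, φ (Metric.infDist z {p ∈ C | T p = p}) ≤ ‖z - T z‖) :
    ∃ p ∈ C, T p = p ∧ Filter.Tendsto x Filter.atTop (nhds p) := by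
  classical
  have ha0 : ∀ n, 0 ≤ a n := fun n => (ha n).1
  have hab : a' ≤ b' := le_trans (hα 0).1 (hα 0).2
  have huc : ∀ {ε M : ℝ}, 0 < ε → 0 < M →
      ∃ δ > 0, ∀ R : ℝ, R ≤ M → ∀ u v : X, ‖u‖ ≤ R → ‖v‖ ≤ R → ε ≤ ‖u - v‖ →
        ‖u + v‖ ≤ 2 * R - δ := fun hε hM => uc_key hε hM
  set F : Set X := {p ∈ C | T p = p} with hF
  obtain ⟨p0, hp0C, hp0⟩ := exists_fixed C hC hCcp hCcv T hT L hL hTL a ha0 halim hTa huc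
  have hFne : F.Nonempty := ⟨p0, hp0C, hp0⟩
  -- F is closed
  have hFclosed : IsClosed F := by
    refine IsSeqClosed.isClosed ?_
    intro z q hz hq
    have hqC : q ∈ C := hCcp.isClosed.isSeqClosed (fun n => (hz n).1) hq
    refine ⟨hqC, ?_⟩
    have hbound : ∀ n, ‖T q - q‖ ≤ (L + 1) * ‖z n - q‖ := by
      intro n
      have h1 : ‖T q - T (z n)‖ ≤ L * ‖q - z n‖ := by
        have := hTL q hqC (z n) (hz n).1 1 le_rfl
        simpa [Function.iterate_one] using this
      have h2 : T q - q = (T q - T (z n)) + (z n - q) := by rw [(hz n).2]; abel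
      calc ‖T q - q‖ ≤ ‖T q - T (z n)‖ + ‖z n - q‖ := by rw [h2]; exact norm_add_le _ _
      _ ≤ L * ‖q - z n‖ + ‖z n - q‖ := by linarith
      _ = (L + 1) * ‖z n - q‖ := by rw [norm_sub_rev]; ring
    have hzq : Tendsto (fun n => (L + 1) * ‖z n - q‖) atTop (nhds 0) := by
      have := (tendsto_iff_norm_sub_tendsto_zero.1 hq).const_mul (L + 1)
      simpa using this
    have hle : ‖T q - q‖ ≤ 0 := ge_of_tendsto' hzq (fun n => hbound n)
    have : T q - q = 0 := norm_le_zero_iff.1 hle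
    have := sub_eq_zero.1 this
    exact this
  -- basic identities at n = 0
  have hy0 : y 0 = x 0 := by rw [hy 0, Function.iterate_zero_apply]; module
  have hx1 : x 1 = x 0 := by rw [hx 0, Function.iterate_zero_apply, hy0]
  -- step estimates
  have hystep : ∀ p ∈ F, ∀ n, 1 ≤ n → ‖y n - p‖ ≤ ‖x n - p‖ + a n := by
    intro p hp n hn
    have hfix : T^[n] p = p := Function.iterate_fixed hp.2 n
    have hid : y n - p = (1 - α n) • (x n - p) + α n • (T^[n] (x n) - p) := by
      rw [hy n]; module
    have hTb : ‖T^[n] (x n) - p‖ ≤ ‖x n - p‖ + a n := by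
      have := hTa (x n) (hxC n) p hp.1 n hn
      rwa [hfix] at this
    have hα1 := (hα n).1
    have hα2 := (hα n).2
    calc ‖y n - p‖ ≤ (1 - α n) * ‖x n - p‖ + α n * ‖T^[n] (x n) - p‖ := by
          rw [hid]
          refine (norm_add_le _ _).trans ?_
          rw [norm_smul, norm_smul, Real.norm_of_nonneg (by linarith),
            Real.norm_of_nonneg (by linarith)]
    _ ≤ (1 - α n) * ‖x n - p‖ + α n * (‖x n - p‖ + a n) := by nlinarith
    _ = ‖x n - p‖ + α n * a n := by ring
    _ ≤ ‖x n - p‖ + a n := by nlinarith [ha0 n]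
  have hxstep : ∀ p ∈ F, ∀ n, 1 ≤ n → ‖x (n + 1) - p‖ ≤ ‖y n - p‖ + a n := by
    intro p hp n hn
    have hfix : T^[n] p = p := Function.iterate_fixed hp.2 n
    have := hTa (y n) (hyC n) p hp.1 n hn
    rw [hfix, ← hx n] at this
    exact this
  have hstep : ∀ p ∈ F, ∀ n, ‖x (n + 1) - p‖ ≤ ‖x n - p‖ + 2 * a n := by
    intro p hp n
    cases n with
    | zero =>
      rw [hx1]
      have := ha0 0
      linarith
    | succ m =>
      have h1 := hystep p hp (m + 1) (by omega)
      have h2 := hxstep p hp (m + 1) (by omega)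
      have := ha0 (m + 1)
      linarith
  -- convergence of ‖x n - p‖ for each fixed point p
  have hconvp : ∀ p ∈ F, ∃ l, 0 ≤ l ∧ Tendsto (fun n => ‖x n - p‖) atTop (nhds l) := by
    intro p hp
    exact seq_converges (fun n => norm_nonneg _) (fun n => by have := ha0 n; linarith)
      (hasum.mul_left 2) (hstep p hp)
  obtain ⟨c0, hc00, hc0⟩ := hconvp p0 ⟨hp0C, hp0⟩
  -- norm estimate for T^[n] (x n)
  have hTnp : ∀ n, 1 ≤ n → ‖T^[n] (x n) - p0‖ ≤ ‖x n - p0‖ + a n := by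
    intro n hn
    have := hTa (x n) (hxC n) p0 hp0C n hn
    rwa [Function.iterate_fixed hp0 n] at this
  -- ‖y n - p0‖ → c0
  have hylim : Tendsto (fun n => ‖y n - p0‖) atTop (nhds c0) := by
    have hup : ∀ n, ‖y n - p0‖ ≤ ‖x n - p0‖ + a n := by
      intro n
      cases n with
      | zero => rw [hy0]; have := ha0 0; linarith
      | succ m => exact hystep p0 ⟨hp0C, hp0⟩ (m + 1) (by omega)
    have hlow : ∀ n, ‖x (n + 1) - p0‖ - a n ≤ ‖y n - p0‖ := by
      intro n
      cases n with
      | zero =>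
        have hxy : x 1 = y 0 := by rw [hx 0, Function.iterate_zero_apply]
        rw [hxy]; have := ha0 0; linarith
      | succ m =>
        have := hxstep p0 ⟨hp0C, hp0⟩ (m + 1) (by omega)
        linarith
    have hlowt : Tendsto (fun n => ‖x (n + 1) - p0‖ - a n) atTop (nhds c0) := by
      have h1 : Tendsto (fun n => ‖x (n + 1) - p0‖) atTop (nhds c0) :=
        hc0.comp (tendsto_add_atTop_nat 1)
      have := h1.sub halim
      simpa using this
    have hupt : Tendsto (fun n => ‖x n - p0‖ + a n) atTop (nhds c0) := by
      have := hc0.add halim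
      simpa using this
    exact tendsto_of_tendsto_of_tendsto_of_le_of_le hlowt hupt hlow hup
  -- Schu's lemma: ‖T^[n] (x n) - x n‖ → 0
  have hreg0 : Tendsto (fun n => ‖T^[n] (x n) - x n‖) atTop (nhds 0) := by
    refine tendsto_order.2 ⟨fun b hb => Eventually.of_forall fun n =>
      lt_of_lt_of_le hb (norm_nonneg _), fun ε hε => ?_⟩
    obtain ⟨δ, hδ, hkey⟩ := huc hε (show (0:ℝ) < c0 + 1 by linarith)
    set t0 := min a' (1 - b') with ht0
    have ht00 : 0 < t0 := lt_min ha' (by linarith)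
    set η := min ((1:ℝ)/2) (t0 * δ / 2) with hη
    have hη0 : 0 < η := lt_min (by norm_num) (by positivity)
    have hη1 : η ≤ 1/2 := min_le_left _ _
    have hη2 : η ≤ t0 * δ / 2 := min_le_right _ _
    have e1 : ∀ᶠ n in atTop, ‖x n - p0‖ < c0 + η / 2 :=
      hc0.eventually_lt_const (by linarith)
    have e2 : ∀ᶠ n in atTop, a n < η / 2 := halim.eventually_lt_const (by linarith)
    have e3 : ∀ᶠ n in atTop, c0 - t0 * δ / 2 < ‖y n - p0‖ :=
      hylim.eventually_const_lt (by linarith)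
    filter_upwards [e1, e2, e3, eventually_ge_atTop 1] with n h1 h2 h3 hn1
    by_contra hcon
    push_neg at hcon
    set R := c0 + η with hR
    have hxb : ‖x n - p0‖ ≤ R := by rw [hR]; linarith
    have hTb : ‖T^[n] (x n) - p0‖ ≤ R := by
      have := hTnp n hn1; rw [hR]; linarith
    have hdiff : ε ≤ ‖(T^[n] (x n) - p0) - (x n - p0)‖ := by
      rw [sub_sub_sub_cancel_right]; exact hcon
    have hkey' := hkey R (by rw [hR]; linarith) _ _ hTb hxb hdiff
    have hα1 := (hα n).1
    have hα2 := (hα n).2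
    have ht0a : t0 ≤ a' := min_le_left _ _
    have ht0b : t0 ≤ 1 - b' := min_le_right _ _
    have hcomb : ‖y n - p0‖ ≤ R - t0 * δ := by
      rcases le_or_gt (α n) (1/2 : ℝ) with hhalf | hhalf
      · have hid : y n - p0 =
            α n • ((T^[n] (x n) - p0) + (x n - p0)) + (1 - 2 * α n) • (x n - p0) := by
          rw [hy n]; module
        calc ‖y n - p0‖ ≤ α n * ‖(T^[n] (x n) - p0) + (x n - p0)‖
              + (1 - 2 * α n) * ‖x n - p0‖ := by
              rw [hid]
              refine (norm_add_le _ _).trans ?_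
              rw [norm_smul, norm_smul, Real.norm_of_nonneg (by linarith),
                Real.norm_of_nonneg (by linarith)]
        _ ≤ α n * (2 * R - δ) + (1 - 2 * α n) * R := by
              have h0 : (0:ℝ) ≤ α n := by linarith
              have h1' : (0:ℝ) ≤ 1 - 2 * α n := by linarith
              have := mul_le_mul_of_nonneg_left hkey' h0
              have := mul_le_mul_of_nonneg_left hxb h1'
              linarith
        _ = R - α n * δ := by ring
        _ ≤ R - t0 * δ := by
              have ht : t0 ≤ α n := by linarith
              have := mul_le_mul_of_nonneg_right ht hδ.le
              linarith
      · have hid : y n - p0 =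
            (1 - α n) • ((T^[n] (x n) - p0) + (x n - p0)) + (2 * α n - 1) • (T^[n] (x n) - p0) := by
          rw [hy n]; module
        calc ‖y n - p0‖ ≤ (1 - α n) * ‖(T^[n] (x n) - p0) + (x n - p0)‖
              + (2 * α n - 1) * ‖T^[n] (x n) - p0‖ := by
              rw [hid]
              refine (norm_add_le _ _).trans ?_
              rw [norm_smul, norm_smul, Real.norm_of_nonneg (by linarith),
                Real.norm_of_nonneg (by linarith)]
        _ ≤ (1 - α n) * (2 * R - δ) + (2 * α n - 1) * R := by
              have h0 : (0:ℝ) ≤ 1 - α n := by linarith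
              have h1' : (0:ℝ) ≤ 2 * α n - 1 := by linarith
              have := mul_le_mul_of_nonneg_left hkey' h0
              have := mul_le_mul_of_nonneg_left hTb h1'
              linarith
        _ = R - (1 - α n) * δ := by ring
        _ ≤ R - t0 * δ := by
              have ht : t0 ≤ 1 - α n := by linarith
              have := mul_le_mul_of_nonneg_right ht hδ.le
              linarith
    rw [hR] at hcomb
    linarith
  -- ‖x (n+1) - x n‖ → 0
  have hdstep : ∀ n, ‖x (n + 1) - x n‖ ≤ (L + 1) * ‖T^[n] (x n) - x n‖ := by
    intro n
    cases n with
    | zero =>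
      rw [hx1]
      simp only [sub_self, norm_zero]
      positivity
    | succ m =>
      have hn1 : 1 ≤ m + 1 := by omega
      have h1 : x (m + 1 + 1) - x (m + 1) =
          (T^[m+1] (y (m + 1)) - T^[m+1] (x (m + 1))) + (T^[m+1] (x (m + 1)) - x (m + 1)) := by
        rw [hx (m + 1)]; abel
      have h2 : ‖T^[m+1] (y (m + 1)) - T^[m+1] (x (m + 1))‖ ≤ L * ‖y (m + 1) - x (m + 1)‖ :=
        hTL _ (hyC _) _ (hxC _) (m + 1) hn1
      have h3 : y (m + 1) - x (m + 1) = α (m + 1) • (T^[m+1] (x (m + 1)) - x (m + 1)) := by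
        rw [hy (m + 1)]; module
      have h4 : ‖y (m + 1) - x (m + 1)‖ ≤ ‖T^[m+1] (x (m + 1)) - x (m + 1)‖ := by
        rw [h3, norm_smul, Real.norm_of_nonneg (by linarith [(hα (m+1)).1])]
        nlinarith [(hα (m+1)).2, norm_nonneg (T^[m+1] (x (m + 1)) - x (m + 1))]
      calc ‖x (m + 1 + 1) - x (m + 1)‖
          ≤ ‖T^[m+1] (y (m + 1)) - T^[m+1] (x (m + 1))‖ + ‖T^[m+1] (x (m + 1)) - x (m + 1)‖ := by
            rw [h1]; exact norm_add_le _ _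
      _ ≤ L * ‖T^[m+1] (x (m + 1)) - x (m + 1)‖ + ‖T^[m+1] (x (m + 1)) - x (m + 1)‖ := by
            have h5 := mul_le_mul_of_nonneg_left h4 hL.le
            linarith
      _ = (L + 1) * ‖T^[m+1] (x (m + 1)) - x (m + 1)‖ := by ring
  have hxdiff : Tendsto (fun n => ‖x (n + 1) - x n‖) atTop (nhds 0) := by
    refine squeeze_zero (fun n => norm_nonneg _) hdstep ?_
    have := hreg0.const_mul (L + 1)
    simpa using this
  -- ‖x n - T (x n)‖ → 0
  have hreg : Tendsto (fun n => ‖x n - T (x n)‖) atTop (nhds 0) := by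
    have hupb : ∀ n, 1 ≤ n → ‖x n - T (x n)‖ ≤
        (1 + L) * ‖x (n + 1) - x n‖ + ‖T^[n+1] (x (n + 1)) - x (n + 1)‖
          + L * ‖T^[n] (x n) - x n‖ := by
      intro n hn
      have hid : x n - T (x n) =
          ((x n - x (n + 1)) + (x (n + 1) - T^[n+1] (x (n + 1))))
          + ((T^[n+1] (x (n + 1)) - T^[n+1] (x n)) + (T^[n+1] (x n) - T (x n))) := by abel
      have h1 : ‖T^[n+1] (x (n + 1)) - T^[n+1] (x n)‖ ≤ L * ‖x (n + 1) - x n‖ :=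
        hTL _ (hxC _) _ (hxC _) (n + 1) (by omega)
      have h2 : ‖T^[n+1] (x n) - T (x n)‖ ≤ L * ‖T^[n] (x n) - x n‖ := by
        have h3 := hTL (T^[n] (x n)) (hT.iterate n (hxC n)) (x n) (hxC n) 1 le_rfl
        rw [Function.iterate_one] at h3
        rw [Function.iterate_succ_apply']
        exact h3
      calc ‖x n - T (x n)‖
          ≤ ‖(x n - x (n + 1)) + (x (n + 1) - T^[n+1] (x (n + 1)))‖
            + ‖(T^[n+1] (x (n + 1)) - T^[n+1] (x n)) + (T^[n+1] (x n) - T (x n))‖ := by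
            rw [hid]; exact norm_add_le _ _
      _ ≤ (‖x n - x (n + 1)‖ + ‖x (n + 1) - T^[n+1] (x (n + 1))‖)
            + (‖T^[n+1] (x (n + 1)) - T^[n+1] (x n)‖ + ‖T^[n+1] (x n) - T (x n)‖) := by
            have := norm_add_le (x n - x (n + 1)) (x (n + 1) - T^[n+1] (x (n + 1)))
            have := norm_add_le (T^[n+1] (x (n + 1)) - T^[n+1] (x n)) (T^[n+1] (x n) - T (x n))
            linarith
      _ ≤ (1 + L) * ‖x (n + 1) - x n‖ + ‖T^[n+1] (x (n + 1)) - x (n + 1)‖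
            + L * ‖T^[n] (x n) - x n‖ := by
            rw [norm_sub_rev (x n) (x (n + 1)), norm_sub_rev (x (n + 1)) (T^[n+1] (x (n + 1)))]
            linarith
    have hupt : Tendsto (fun n => (1 + L) * ‖x (n + 1) - x n‖
        + ‖T^[n+1] (x (n + 1)) - x (n + 1)‖ + L * ‖T^[n] (x n) - x n‖) atTop (nhds 0) := by
      have t1 := hxdiff.const_mul (1 + L)
      have t2 : Tendsto (fun n => ‖T^[n+1] (x (n + 1)) - x (n + 1)‖) atTop (nhds 0) :=
        hreg0.comp (tendsto_add_atTop_nat 1)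
      have t3 := hreg0.const_mul L
      have := (t1.add t2).add t3
      simpa using this
    refine tendsto_of_tendsto_of_tendsto_of_le_of_le' tendsto_const_nhds hupt
      (Eventually.of_forall fun n => norm_nonneg _) ?_
    filter_upwards [eventually_ge_atTop 1] with n hn
    exact hupb n hn
  -- infDist to F tends to 0
  have hdstepF : ∀ n, infDist (x (n + 1)) F ≤ infDist (x n) F + 2 * a n := by
    intro n
    have h1 : ∀ q : F, infDist (x (n + 1)) F - 2 * a n ≤ dist (x n) q := by
      intro q
      have h2 : infDist (x (n + 1)) F ≤ dist (x (n + 1)) q := infDist_le_dist_of_mem q.2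
      have h3 := hstep q q.2 n
      rw [dist_eq_norm] at h2 ⊢
      linarith
    haveI : Nonempty F := hFne.to_subtype
    have h4 : infDist (x (n + 1)) F - 2 * a n ≤ ⨅ q : F, dist (x n) q := le_ciInf h1
    rw [← infDist_eq_iInf] at h4
    linarith
  obtain ⟨ℓ, hℓ0, hℓ⟩ := seq_converges (c := fun n => infDist (x n) F)
    (fun n => infDist_nonneg) (fun n => by have := ha0 n; linarith)
    (hasum.mul_left 2) hdstepF
  have hℓzero : ℓ = 0 := by
    by_contra hne
    have hℓpos : 0 < ℓ := lt_of_le_of_ne hℓ0 (Ne.symm hne)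
    have e1 : ∀ᶠ n in atTop, ℓ / 2 < infDist (x n) F :=
      hℓ.eventually_const_lt (by linarith)
    have e2 : ∀ᶠ n in atTop, ‖x n - T (x n)‖ < φ (ℓ / 2) :=
      hreg.eventually_lt_const (hφpos _ (by linarith))
    obtain ⟨n, h1, h2⟩ := (e1.and e2).exists
    have h3 := hcond (x n) (hxC n)
    have h4 : φ (ℓ / 2) ≤ φ (infDist (x n) F) := hφmono _ _ (by linarith) h1.le
    linarith
  -- get the limit via compactness
  obtain ⟨z, hzC, ns, hns, hzs⟩ := hCcp.tendsto_subseq hxC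
  have hsub1 : Tendsto (fun k => infDist (x (ns k)) F) atTop (nhds (infDist z F)) :=
    ((continuous_infDist_pt F).tendsto z).comp hzs
  have hsub2 : Tendsto (fun k => infDist (x (ns k)) F) atTop (nhds 0) := by
    rw [← hℓzero]
    exact hℓ.comp hns.tendsto_atTop
  have hzF : z ∈ F := by
    rw [hFclosed.mem_iff_infDist_zero hFne]
    exact tendsto_nhds_unique hsub1 hsub2
  obtain ⟨lz, hlz0, hlz⟩ := hconvp z hzF
  have hsub3 : Tendsto (fun k => ‖x (ns k) - z‖) atTop (nhds 0) :=
    tendsto_iff_norm_sub_tendsto_zero.1 hzs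
  have hlzzero : lz = 0 :=
    tendsto_nhds_unique (hlz.comp hns.tendsto_atTop) hsub3
  refine ⟨z, hzF.1, hzF.2, ?_⟩
  rw [tendsto_iff_norm_sub_tendsto_zero, ← hlzzero]
  exact hlz
end
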